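/- arXiv:1707.01114 — 13 statements merged into one kernel-verified Lean document; each statement's English description precedes it below -/
import Mathlib

section
/- Let X be a finite set, let P and Q be probability mass functions on X with Q(x) > 0 for all x, and let T : X → [0,1] be an arbitrary (randomized) binary test. Set p = ∑_x T(x) P(x) and q = ∑_x T(x) Q(x), and assume 0 < q < 1. Then for every α ∈ (0,1) ∪ (1,∞), the Rényi divergence satisfies the binary data-processing inequality D_α(P,Q) ≥ d_α(p,q). -/
/-!
Weight the two outcomes of the test by `T` and `1 - T`. For each weight `w`, Jensen's inequality
for `t ↦ t ^ α` under the probability weights proportional to `w x * Q x`, evaluated at the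
likelihood ratios `P x / Q x`, compares `∑ w P ^ α Q ^ (1 - α)` with
`(∑ w P) ^ α (∑ w Q) ^ (1 - α)`: it is larger for `α ≥ 1` (convexity) and smaller for
`α ≤ 1` (concavity). Adding the two weights gives the comparison of `∑ P ^ α Q ^ (1 - α)` with
its binary counterpart, and the sign of `1 / (α - 1)` turns either comparison into the claim.
-/

open Finset Real

section

variable {ι : Type*} {s : Finset ι}

/-- Jensen's inequality for the perspective `(a, b) ↦ b * φ (a / b)` of a convex function. -/
theorem ConvexOn.mul_map_sum_div_le {φ : ℝ → ℝ} (hφ : ConvexOn ℝ (Set.Ici 0) φ)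
    {w a b : ι → ℝ} (hw : ∀ i ∈ s, 0 ≤ w i) (ha : ∀ i ∈ s, 0 ≤ a i) (hb : ∀ i ∈ s, 0 < b i)
    (hB : 0 < ∑ i ∈ s, w i * b i) :
    (∑ i ∈ s, w i * b i) * φ ((∑ i ∈ s, w i * a i) / ∑ i ∈ s, w i * b i) ≤
      ∑ i ∈ s, w i * (b i * φ (a i / b i)) := by
  set B := ∑ i ∈ s, w i * b i
  have hjensen := hφ.map_sum_le (t := s) (w := fun i ↦ w i * b i / B) (p := fun i ↦ a i / b i)
    (fun i hi ↦ div_nonneg (mul_nonneg (hw i hi) (hb i hi).le) hB.le)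
    (by rw [← sum_div, div_self hB.ne'])
    (fun i hi ↦ Set.mem_Ici.2 (div_nonneg (ha i hi) (hb i hi).le))
  have hmean : ∑ i ∈ s, (w i * b i / B) • (a i / b i) = (∑ i ∈ s, w i * a i) / B := by
    rw [sum_div]
    refine sum_congr rfl fun i hi ↦ ?_
    rw [smul_eq_mul]
    field_simp [(hb i hi).ne']
  have hvalue : ∑ i ∈ s, (w i * b i / B) • φ (a i / b i) =
      (∑ i ∈ s, w i * (b i * φ (a i / b i))) / B := by
    rw [sum_div]
    exact sum_congr rfl fun i _ ↦ by rw [smul_eq_mul]; ring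
  rw [hmean, hvalue, le_div_iff₀ hB] at hjensen
  linarith

theorem ConcaveOn.sum_le_mul_map_sum_div {φ : ℝ → ℝ} (hφ : ConcaveOn ℝ (Set.Ici 0) φ)
    {w a b : ι → ℝ} (hw : ∀ i ∈ s, 0 ≤ w i) (ha : ∀ i ∈ s, 0 ≤ a i) (hb : ∀ i ∈ s, 0 < b i)
    (hB : 0 < ∑ i ∈ s, w i * b i) :
    ∑ i ∈ s, w i * (b i * φ (a i / b i)) ≤
      (∑ i ∈ s, w i * b i) * φ ((∑ i ∈ s, w i * a i) / ∑ i ∈ s, w i * b i) := by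
  simpa only [Pi.neg_apply, mul_neg, sum_neg_distrib, neg_le_neg_iff] using
    hφ.neg.mul_map_sum_div_le hw ha hb hB

theorem Real.mul_div_rpow_eq {x y : ℝ} (hx : 0 ≤ x) (hy : 0 < y) (α : ℝ) :
    y * (x / y) ^ α = x ^ α * y ^ (1 - α) := by
  rw [div_rpow hx hy.le, rpow_sub hy, rpow_one]
  field_simp [(rpow_pos_of_pos hy α).ne']

variable {w P Q : ι → ℝ} {α : ℝ}

theorem Real.sum_mul_mul_div_rpow (hP : ∀ i ∈ s, 0 ≤ P i) (hQ : ∀ i ∈ s, 0 < Q i) (α : ℝ) :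
    ∑ i ∈ s, w i * (Q i * (P i / Q i) ^ α) = ∑ i ∈ s, w i * (P i ^ α * Q i ^ (1 - α)) :=
  sum_congr rfl fun i hi ↦ by rw [mul_div_rpow_eq (hP i hi) (hQ i hi)]

theorem Real.rpow_sum_mul_rpow_sum_le (hα : 1 ≤ α) (hw : ∀ i ∈ s, 0 ≤ w i)
    (hP : ∀ i ∈ s, 0 ≤ P i) (hQ : ∀ i ∈ s, 0 < Q i) (hwQ : 0 < ∑ i ∈ s, w i * Q i) :
    (∑ i ∈ s, w i * P i) ^ α * (∑ i ∈ s, w i * Q i) ^ (1 - α) ≤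
      ∑ i ∈ s, w i * (P i ^ α * Q i ^ (1 - α)) :=
  calc (∑ i ∈ s, w i * P i) ^ α * (∑ i ∈ s, w i * Q i) ^ (1 - α)
      = (∑ i ∈ s, w i * Q i) * ((∑ i ∈ s, w i * P i) / ∑ i ∈ s, w i * Q i) ^ α :=
        (mul_div_rpow_eq (sum_nonneg fun i hi ↦ mul_nonneg (hw i hi) (hP i hi)) hwQ α).symm
    _ ≤ ∑ i ∈ s, w i * (Q i * (P i / Q i) ^ α) :=
        (convexOn_rpow hα).mul_map_sum_div_le hw hP hQ hwQ
    _ = ∑ i ∈ s, w i * (P i ^ α * Q i ^ (1 - α)) := sum_mul_mul_div_rpow hP hQ α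

theorem Real.sum_le_rpow_sum_mul_rpow_sum (hα₀ : 0 ≤ α) (hα₁ : α ≤ 1) (hw : ∀ i ∈ s, 0 ≤ w i)
    (hP : ∀ i ∈ s, 0 ≤ P i) (hQ : ∀ i ∈ s, 0 < Q i) (hwQ : 0 < ∑ i ∈ s, w i * Q i) :
    ∑ i ∈ s, w i * (P i ^ α * Q i ^ (1 - α)) ≤
      (∑ i ∈ s, w i * P i) ^ α * (∑ i ∈ s, w i * Q i) ^ (1 - α) :=
  calc ∑ i ∈ s, w i * (P i ^ α * Q i ^ (1 - α))
      = ∑ i ∈ s, w i * (Q i * (P i / Q i) ^ α) := (sum_mul_mul_div_rpow hP hQ α).symm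
    _ ≤ (∑ i ∈ s, w i * Q i) * ((∑ i ∈ s, w i * P i) / ∑ i ∈ s, w i * Q i) ^ α :=
        (concaveOn_rpow hα₀ hα₁).sum_le_mul_map_sum_div hw hP hQ hwQ
    _ = (∑ i ∈ s, w i * P i) ^ α * (∑ i ∈ s, w i * Q i) ^ (1 - α) :=
        mul_div_rpow_eq (sum_nonneg fun i hi ↦ mul_nonneg (hw i hi) (hP i hi)) hwQ α

theorem Real.sum_rpow_mul_rpow_pos (hP : ∀ i ∈ s, 0 ≤ P i) (hQ : ∀ i ∈ s, 0 < Q i)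
    (hPpos : 0 < ∑ i ∈ s, P i) : 0 < ∑ i ∈ s, P i ^ α * Q i ^ (1 - α) := by
  obtain ⟨i, hi, hPi⟩ := (sum_pos_iff_of_nonneg hP).1 hPpos
  exact sum_pos' (fun j hj ↦ by have := hP j hj; have := hQ j hj; positivity)
    ⟨i, hi, by have := hQ i hi; positivity⟩

theorem Real.rpow_mul_rpow_add_rpow_mul_rpow_pos {p q : ℝ} (hp₀ : 0 ≤ p) (hp₁ : p ≤ 1)
    (hq₀ : 0 < q) (hq₁ : q < 1) (α : ℝ) :
    0 < p ^ α * q ^ (1 - α) + (1 - p) ^ α * (1 - q) ^ (1 - α) := by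
  simpa [Fin.sum_univ_two] using
    sum_rpow_mul_rpow_pos (s := univ) (P := ![p, 1 - p]) (Q := ![q, 1 - q]) (α := α)
      (by simp [Fin.forall_fin_two, hp₀, hp₁]) (by simp [Fin.forall_fin_two, hq₀, hq₁])
      (by simp [Fin.sum_univ_two])

variable {T : ι → ℝ}

theorem Real.sum_rpow_mul_rpow_eq_add (P Q T : ι → ℝ) (α : ℝ) :
    ∑ i ∈ s, P i ^ α * Q i ^ (1 - α) = ∑ i ∈ s, T i * (P i ^ α * Q i ^ (1 - α)) +
      ∑ i ∈ s, (1 - T i) * (P i ^ α * Q i ^ (1 - α)) := by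
  rw [← sum_add_distrib]
  exact sum_congr rfl fun i _ ↦ by ring

theorem Real.binary_le_sum_rpow_mul_rpow (hα : 1 ≤ α) (hT₀ : ∀ i ∈ s, 0 ≤ T i)
    (hT₁ : ∀ i ∈ s, T i ≤ 1) (hP : ∀ i ∈ s, 0 ≤ P i) (hQ : ∀ i ∈ s, 0 < Q i)
    (hTQ : 0 < ∑ i ∈ s, T i * Q i) (hTQ' : 0 < ∑ i ∈ s, (1 - T i) * Q i) :
    (∑ i ∈ s, T i * P i) ^ α * (∑ i ∈ s, T i * Q i) ^ (1 - α) +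
        (∑ i ∈ s, (1 - T i) * P i) ^ α * (∑ i ∈ s, (1 - T i) * Q i) ^ (1 - α) ≤
      ∑ i ∈ s, P i ^ α * Q i ^ (1 - α) := by
  rw [sum_rpow_mul_rpow_eq_add P Q T]
  exact add_le_add (rpow_sum_mul_rpow_sum_le hα hT₀ hP hQ hTQ)
    (rpow_sum_mul_rpow_sum_le hα (fun i hi ↦ sub_nonneg.2 (hT₁ i hi)) hP hQ hTQ')

theorem Real.sum_rpow_mul_rpow_le_binary (hα₀ : 0 ≤ α) (hα₁ : α ≤ 1) (hT₀ : ∀ i ∈ s, 0 ≤ T i)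
    (hT₁ : ∀ i ∈ s, T i ≤ 1) (hP : ∀ i ∈ s, 0 ≤ P i) (hQ : ∀ i ∈ s, 0 < Q i)
    (hTQ : 0 < ∑ i ∈ s, T i * Q i) (hTQ' : 0 < ∑ i ∈ s, (1 - T i) * Q i) :
    ∑ i ∈ s, P i ^ α * Q i ^ (1 - α) ≤
      (∑ i ∈ s, T i * P i) ^ α * (∑ i ∈ s, T i * Q i) ^ (1 - α) +
        (∑ i ∈ s, (1 - T i) * P i) ^ α * (∑ i ∈ s, (1 - T i) * Q i) ^ (1 - α) := by
  rw [sum_rpow_mul_rpow_eq_add P Q T]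
  exact add_le_add (sum_le_rpow_sum_mul_rpow_sum hα₀ hα₁ hT₀ hP hQ hTQ)
    (sum_le_rpow_sum_mul_rpow_sum hα₀ hα₁ (fun i hi ↦ sub_nonneg.2 (hT₁ i hi)) hP hQ hTQ')

end

/-- **Binary data-processing inequality for the Rényi divergence.**
For probability mass functions `P`, `Q` on a finite set `X` with `Q > 0` everywhere,
any randomized binary test `T : X → [0,1]` with acceptance probabilities
`p = ∑ x, T x * P x` and `q = ∑ x, T x * Q x` (with `0 < q < 1`), and any order
`α ∈ (0,1) ∪ (1,∞)`, we have `D_α(P,Q) ≥ d_α(p,q)`. -/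
theorem renyi_binary_data_processing {X : Type*} [Fintype X]
    (P Q : X → ℝ)
    (hP0 : ∀ x, 0 ≤ P x) (hP1 : ∑ x, P x = 1)
    (hQ0 : ∀ x, 0 < Q x) (hQ1 : ∑ x, Q x = 1)
    (T : X → ℝ) (hT : ∀ x, T x ∈ Set.Icc (0 : ℝ) 1)
    (p q : ℝ) (hp : p = ∑ x, T x * P x) (hq : q = ∑ x, T x * Q x)
    (hq0 : 0 < q) (hq1 : q < 1)
    (α : ℝ) (hα : α ∈ Set.Ioo (0 : ℝ) 1 ∪ Set.Ioi (1 : ℝ)) :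
    (1 / (α - 1)) * Real.log (∑ x, P x ^ α * Q x ^ (1 - α)) ≥
      (1 / (α - 1)) * Real.log
        (p ^ α * q ^ (1 - α) + (1 - p) ^ α * (1 - q) ^ (1 - α)) := by
  have hT₀ : ∀ x ∈ univ, 0 ≤ T x := fun x _ ↦ (hT x).1
  have hT₁ : ∀ x ∈ univ, T x ≤ 1 := fun x _ ↦ (hT x).2
  have hP : ∀ x ∈ univ, 0 ≤ P x := fun x _ ↦ hP0 x
  have hQ : ∀ x ∈ univ, 0 < Q x := fun x _ ↦ hQ0 x
  have hp' : ∑ x, (1 - T x) * P x = 1 - p := by simp [sub_mul, sum_sub_distrib, hP1, hp]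
  have hq' : ∑ x, (1 - T x) * Q x = 1 - q := by simp [sub_mul, sum_sub_distrib, hQ1, hq]
  have hTQ : 0 < ∑ x, T x * Q x := hq ▸ hq0
  have hTQ' : 0 < ∑ x, (1 - T x) * Q x := hq' ▸ sub_pos.2 hq1
  rcases hα with ⟨hα₀, hα₁⟩ | hα₁
  · have hle := sum_rpow_mul_rpow_le_binary hα₀.le hα₁.le hT₀ hT₁ hP hQ hTQ hTQ'
    rw [hp', hq', ← hp, ← hq] at hle
    exact mul_le_mul_of_nonpos_left (log_le_log (sum_rpow_mul_rpow_pos hP hQ (hP1 ▸ one_pos)) hle)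
      (div_nonpos_of_nonneg_of_nonpos zero_le_one (by linarith))
  · have hle := binary_le_sum_rpow_mul_rpow hα₁.le hT₀ hT₁ hP hQ hTQ hTQ'
    rw [hp', hq', ← hp, ← hq] at hle
    have hp₀ : 0 ≤ p := hp ▸ sum_nonneg fun x hx ↦ mul_nonneg (hT₀ x hx) (hP x hx)
    have hp₁ : p ≤ 1 := by
      have := sum_nonneg fun x hx ↦ mul_nonneg (sub_nonneg.2 (hT₁ x hx)) (hP x hx)
      linarith
    exact mul_le_mul_of_nonneg_left
      (log_le_log (rpow_mul_rpow_add_rpow_mul_rpow_pos hp₀ hp₁ hq0 hq1 α) hle)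
      (one_div_nonneg.2 (by linarith [hα₁.out]))
end

section
/- Let X and Y be finite sets with |X| = m ≥ 2, let P be a probability mass function on X × Y, let σ be a probability mass function on Y with σ(y) > 0 for all y, and let Λ be a randomized guessing strategy, i.e., for each y ∈ Y, Λ(·|y) is a probability mass function on X. Let P_Λ = ∑_{x,y} P(x,y) Λ(x|y) be the probability of correctly guessing x from y under Λ, and assume 0 < P_Λ < 1. Then for every α ∈ (0,1) ∪ (1,∞), D_α(P, π_X ⊗ σ) ≥ d_α(P_Λ, 1/m), where π_X ⊗ σ denotes the product distribution (x,y) ↦ σ(y)/m. -/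
/-!
The quantity `∑ P^α Q^(1-α)` can only move towards `1` when `P` and `Q` are pushed through a
channel (data processing): for `α < 1` it increases, for `α > 1` it decreases, and the prefactor
`1 / (α - 1)` turns both cases into a decrease of `D_α`. Applying this to the binary channel that
reports whether the guess `x̂ ∼ Λ(·|y)` is correct sends `P` to the Bernoulli law of parameter
`P_Λ` and `π_X ⊗ σ` to the Bernoulli law of parameter `1/m`. The data-processing step itself is
Jensen's inequality for the perspective `b f(a/b)` of `f = (·)^α`, concave for `α ≤ 1` and convex
for `α ≥ 1`.
-/

open Finset Real

lemma zero_rpow_mul_zero_rpow_one_sub (α : ℝ) : (0 : ℝ) ^ α * 0 ^ (1 - α) = 0 := by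
  rcases eq_or_ne α 0 with rfl | hα
  · simp
  · rw [zero_rpow hα, zero_mul]

lemma mul_rpow_mul_rpow_one_sub {p q t : ℝ} (α : ℝ) (hp : 0 ≤ p) (hq : 0 ≤ q) (ht : 0 ≤ t) :
    (p * t) ^ α * (q * t) ^ (1 - α) = p ^ α * q ^ (1 - α) * t := by
  rcases ht.eq_or_lt with rfl | ht
  · simp only [mul_zero, zero_rpow_mul_zero_rpow_one_sub]
  · rw [mul_rpow hp ht.le, mul_rpow hq ht.le]
    calc p ^ α * t ^ α * (q ^ (1 - α) * t ^ (1 - α))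
        = p ^ α * q ^ (1 - α) * t ^ (α + (1 - α)) := by rw [rpow_add ht]; ring
      _ = p ^ α * q ^ (1 - α) * t := by norm_num

lemma rpow_mul_rpow_one_sub_eq_mul_div_rpow {x y : ℝ} (α : ℝ) (hx : 0 ≤ x) (hy : 0 ≤ y)
    (hxy : y = 0 → x = 0) : x ^ α * y ^ (1 - α) = y * (x / y) ^ α := by
  rcases hy.eq_or_lt with rfl | hy
  · rw [hxy rfl, zero_rpow_mul_zero_rpow_one_sub, zero_mul]
  · rw [div_rpow hx hy.le, rpow_sub hy, rpow_one]
    field_simp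

section Perspective

variable {ι : Type*} {s : Finset ι} {a b : ι → ℝ}

lemma sum_eq_zero_of_sum_eq_zero_of_imp (hb : ∀ i ∈ s, 0 ≤ b i)
    (hab : ∀ i ∈ s, b i = 0 → a i = 0) (hB : ∑ i ∈ s, b i = 0) : ∑ i ∈ s, a i = 0 :=
  sum_eq_zero fun i hi => hab i hi ((sum_eq_zero_iff_of_nonneg hb).mp hB i hi)

lemma ConvexOn.mul_map_div_sum_le {f : ℝ → ℝ} (hf : ConvexOn ℝ (Set.Ici 0) f)
    (ha : ∀ i ∈ s, 0 ≤ a i) (hb : ∀ i ∈ s, 0 ≤ b i) (hab : ∀ i ∈ s, b i = 0 → a i = 0) :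
    (∑ i ∈ s, b i) * f ((∑ i ∈ s, a i) / ∑ i ∈ s, b i) ≤ ∑ i ∈ s, b i * f (a i / b i) := by
  rcases (sum_nonneg hb).eq_or_lt with hB | hB
  · have hb0 := (sum_eq_zero_iff_of_nonneg hb).mp hB.symm
    rw [← hB, zero_mul]
    exact (sum_eq_zero fun i hi => by rw [hb0 i hi, zero_mul]).ge
  set B := ∑ i ∈ s, b i
  have hweight : ∀ i ∈ s, b i / B * (a i / b i) = a i / B := fun i hi => by
    rcases eq_or_ne (b i) 0 with hbi | hbi
    · simp [hbi, hab i hi hbi]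
    · field_simp
  have hjensen := hf.map_sum_le (t := s) (w := fun i => b i / B) (p := fun i => a i / b i)
    (fun i hi => div_nonneg (hb i hi) hB.le) (by rw [← sum_div, div_self hB.ne'])
    (fun i hi => div_nonneg (ha i hi) (hb i hi))
  simp only [smul_eq_mul, sum_congr rfl hweight, ← sum_div] at hjensen
  calc B * f ((∑ i ∈ s, a i) / B) ≤ B * ∑ i ∈ s, b i / B * f (a i / b i) := by gcongr
    _ = ∑ i ∈ s, b i * f (a i / b i) := by
      rw [mul_sum]
      exact sum_congr rfl fun i _ => by field_simp

lemma ConcaveOn.sum_mul_map_div_le {f : ℝ → ℝ} (hf : ConcaveOn ℝ (Set.Ici 0) f)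
    (ha : ∀ i ∈ s, 0 ≤ a i) (hb : ∀ i ∈ s, 0 ≤ b i) (hab : ∀ i ∈ s, b i = 0 → a i = 0) :
    ∑ i ∈ s, b i * f (a i / b i) ≤ (∑ i ∈ s, b i) * f ((∑ i ∈ s, a i) / ∑ i ∈ s, b i) := by
  simpa only [Pi.neg_apply, mul_neg, sum_neg_distrib, neg_le_neg_iff]
    using hf.neg.mul_map_div_sum_le ha hb hab

lemma sum_rpow_mul_rpow_one_sub_le {α : ℝ} (hα₀ : 0 ≤ α) (hα₁ : α ≤ 1)
    (ha : ∀ i ∈ s, 0 ≤ a i) (hb : ∀ i ∈ s, 0 ≤ b i) (hab : ∀ i ∈ s, b i = 0 → a i = 0) :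
    ∑ i ∈ s, a i ^ α * b i ^ (1 - α) ≤ (∑ i ∈ s, a i) ^ α * (∑ i ∈ s, b i) ^ (1 - α) := by
  rw [sum_congr rfl fun i hi => rpow_mul_rpow_one_sub_eq_mul_div_rpow α (ha i hi) (hb i hi)
      (hab i hi),
    rpow_mul_rpow_one_sub_eq_mul_div_rpow α (sum_nonneg ha) (sum_nonneg hb)
      (sum_eq_zero_of_sum_eq_zero_of_imp hb hab)]
  exact (concaveOn_rpow hα₀ hα₁).sum_mul_map_div_le ha hb hab

lemma rpow_mul_rpow_one_sub_le_sum {α : ℝ} (hα : 1 ≤ α)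
    (ha : ∀ i ∈ s, 0 ≤ a i) (hb : ∀ i ∈ s, 0 ≤ b i) (hab : ∀ i ∈ s, b i = 0 → a i = 0) :
    (∑ i ∈ s, a i) ^ α * (∑ i ∈ s, b i) ^ (1 - α) ≤ ∑ i ∈ s, a i ^ α * b i ^ (1 - α) := by
  rw [sum_congr rfl fun i hi => rpow_mul_rpow_one_sub_eq_mul_div_rpow α (ha i hi) (hb i hi)
      (hab i hi),
    rpow_mul_rpow_one_sub_eq_mul_div_rpow α (sum_nonneg ha) (sum_nonneg hb)
      (sum_eq_zero_of_sum_eq_zero_of_imp hb hab)]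
  exact (convexOn_rpow hα).mul_map_div_sum_le ha hb hab

variable {w : ι → ℝ}

lemma sum_rpow_mul_rpow_one_sub_eq_add (α : ℝ) (ha : ∀ i ∈ s, 0 ≤ a i) (hb : ∀ i ∈ s, 0 ≤ b i)
    (hw₀ : ∀ i ∈ s, 0 ≤ w i) (hw₁ : ∀ i ∈ s, w i ≤ 1) :
    ∑ i ∈ s, a i ^ α * b i ^ (1 - α) =
      ∑ i ∈ s, (a i * w i) ^ α * (b i * w i) ^ (1 - α) +
        ∑ i ∈ s, (a i * (1 - w i)) ^ α * (b i * (1 - w i)) ^ (1 - α) := by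
  rw [← sum_add_distrib]
  refine sum_congr rfl fun i hi => ?_
  rw [mul_rpow_mul_rpow_one_sub α (ha i hi) (hb i hi) (hw₀ i hi),
    mul_rpow_mul_rpow_one_sub α (ha i hi) (hb i hi) (sub_nonneg.mpr (hw₁ i hi))]
  ring

lemma mul_eq_zero_imp_mul_eq_zero {t : ι → ℝ} (hab : ∀ i ∈ s, b i = 0 → a i = 0) :
    ∀ i ∈ s, b i * t i = 0 → a i * t i = 0 := fun i hi h => by
  rcases mul_eq_zero.mp h with h | h <;> simp [h, hab i hi]

lemma sum_rpow_mul_rpow_one_sub_le_add {α : ℝ} (hα₀ : 0 ≤ α) (hα₁ : α ≤ 1)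
    (ha : ∀ i ∈ s, 0 ≤ a i) (hb : ∀ i ∈ s, 0 ≤ b i) (hab : ∀ i ∈ s, b i = 0 → a i = 0)
    (hw₀ : ∀ i ∈ s, 0 ≤ w i) (hw₁ : ∀ i ∈ s, w i ≤ 1) :
    ∑ i ∈ s, a i ^ α * b i ^ (1 - α) ≤
      (∑ i ∈ s, a i * w i) ^ α * (∑ i ∈ s, b i * w i) ^ (1 - α) +
        (∑ i ∈ s, a i * (1 - w i)) ^ α * (∑ i ∈ s, b i * (1 - w i)) ^ (1 - α) := by
  have hw₁' : ∀ i ∈ s, 0 ≤ 1 - w i := fun i hi => sub_nonneg.mpr (hw₁ i hi)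
  rw [sum_rpow_mul_rpow_one_sub_eq_add α ha hb hw₀ hw₁]
  gcongr
  · exact sum_rpow_mul_rpow_one_sub_le hα₀ hα₁ (fun i hi => mul_nonneg (ha i hi) (hw₀ i hi))
      (fun i hi => mul_nonneg (hb i hi) (hw₀ i hi)) (mul_eq_zero_imp_mul_eq_zero hab)
  · exact sum_rpow_mul_rpow_one_sub_le hα₀ hα₁ (fun i hi => mul_nonneg (ha i hi) (hw₁' i hi))
      (fun i hi => mul_nonneg (hb i hi) (hw₁' i hi)) (mul_eq_zero_imp_mul_eq_zero hab)

lemma add_le_sum_rpow_mul_rpow_one_sub {α : ℝ} (hα : 1 ≤ α)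
    (ha : ∀ i ∈ s, 0 ≤ a i) (hb : ∀ i ∈ s, 0 ≤ b i) (hab : ∀ i ∈ s, b i = 0 → a i = 0)
    (hw₀ : ∀ i ∈ s, 0 ≤ w i) (hw₁ : ∀ i ∈ s, w i ≤ 1) :
    (∑ i ∈ s, a i * w i) ^ α * (∑ i ∈ s, b i * w i) ^ (1 - α) +
        (∑ i ∈ s, a i * (1 - w i)) ^ α * (∑ i ∈ s, b i * (1 - w i)) ^ (1 - α) ≤
      ∑ i ∈ s, a i ^ α * b i ^ (1 - α) := by
  have hw₁' : ∀ i ∈ s, 0 ≤ 1 - w i := fun i hi => sub_nonneg.mpr (hw₁ i hi)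
  rw [sum_rpow_mul_rpow_one_sub_eq_add α ha hb hw₀ hw₁]
  gcongr
  · exact rpow_mul_rpow_one_sub_le_sum hα (fun i hi => mul_nonneg (ha i hi) (hw₀ i hi))
      (fun i hi => mul_nonneg (hb i hi) (hw₀ i hi)) (mul_eq_zero_imp_mul_eq_zero hab)
  · exact rpow_mul_rpow_one_sub_le_sum hα (fun i hi => mul_nonneg (ha i hi) (hw₁' i hi))
      (fun i hi => mul_nonneg (hb i hi) (hw₁' i hi)) (mul_eq_zero_imp_mul_eq_zero hab)

lemma sum_rpow_mul_rpow_one_sub_pos (α : ℝ) (ha : ∀ i ∈ s, 0 ≤ a i) (hb : ∀ i ∈ s, 0 < b i)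
    (hA : 0 < ∑ i ∈ s, a i) : 0 < ∑ i ∈ s, a i ^ α * b i ^ (1 - α) := by
  obtain ⟨i, hi, hai⟩ : ∃ i ∈ s, (0 : ℝ) < a i := exists_lt_of_sum_lt (by simpa using hA)
  exact sum_pos' (fun j hj => mul_nonneg (rpow_nonneg (ha j hj) _) (rpow_nonneg (hb j hj).le _))
    ⟨i, hi, mul_pos (rpow_pos_of_pos hai _) (rpow_pos_of_pos (hb i hi) _)⟩

lemma sum_mul_rpow_mul_sum_mul_rpow_one_sub_pos (α : ℝ) {t : ι → ℝ} (ha : ∀ i ∈ s, 0 ≤ a i)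
    (hb : ∀ i ∈ s, 0 < b i) (ht : ∀ i ∈ s, 0 ≤ t i) (hAt : 0 < ∑ i ∈ s, a i * t i) :
    0 < (∑ i ∈ s, a i * t i) ^ α * (∑ i ∈ s, b i * t i) ^ (1 - α) := by
  obtain ⟨i, hi, hati⟩ : ∃ i ∈ s, (0 : ℝ) < a i * t i := exists_lt_of_sum_lt (by simpa using hAt)
  have hBt : 0 < ∑ i ∈ s, b i * t i :=
    sum_pos' (fun j hj => mul_nonneg (hb j hj).le (ht j hj))
      ⟨i, hi, mul_pos (hb i hi) (pos_of_mul_pos_right hati (ha i hi))⟩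
  positivity

lemma sum_mul_rpow_mul_sum_mul_rpow_one_sub_nonneg (α : ℝ) {t : ι → ℝ}
    (ha : ∀ i ∈ s, 0 ≤ a i) (hb : ∀ i ∈ s, 0 ≤ b i) (ht : ∀ i ∈ s, 0 ≤ t i) :
    0 ≤ (∑ i ∈ s, a i * t i) ^ α * (∑ i ∈ s, b i * t i) ^ (1 - α) :=
  mul_nonneg (rpow_nonneg (sum_nonneg fun i hi => mul_nonneg (ha i hi) (ht i hi)) _)
    (rpow_nonneg (sum_nonneg fun i hi => mul_nonneg (hb i hi) (ht i hi)) _)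

lemma add_sum_mul_rpow_mul_sum_mul_rpow_one_sub_pos (α : ℝ) (ha : ∀ i ∈ s, 0 ≤ a i)
    (hb : ∀ i ∈ s, 0 < b i) (hA : 0 < ∑ i ∈ s, a i)
    (hw₀ : ∀ i ∈ s, 0 ≤ w i) (hw₁ : ∀ i ∈ s, w i ≤ 1) :
    0 < (∑ i ∈ s, a i * w i) ^ α * (∑ i ∈ s, b i * w i) ^ (1 - α) +
      (∑ i ∈ s, a i * (1 - w i)) ^ α * (∑ i ∈ s, b i * (1 - w i)) ^ (1 - α) := by
  have hw₁' : ∀ i ∈ s, 0 ≤ 1 - w i := fun i hi => sub_nonneg.mpr (hw₁ i hi)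
  have hb' : ∀ i ∈ s, 0 ≤ b i := fun i hi => (hb i hi).le
  rcases (sum_nonneg fun i hi => mul_nonneg (ha i hi) (hw₀ i hi)).eq_or_lt with hAw | hAw
  · have hAw' : 0 < ∑ i ∈ s, a i * (1 - w i) := by
      simpa only [mul_sub, mul_one, sum_sub_distrib, ← hAw, sub_zero] using hA
    exact add_pos_of_nonneg_of_pos
      (sum_mul_rpow_mul_sum_mul_rpow_one_sub_nonneg α ha hb' hw₀)
      (sum_mul_rpow_mul_sum_mul_rpow_one_sub_pos α ha hb hw₁' hAw')
  · exact add_pos_of_pos_of_nonneg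
      (sum_mul_rpow_mul_sum_mul_rpow_one_sub_pos α ha hb hw₀ hAw)
      (sum_mul_rpow_mul_sum_mul_rpow_one_sub_nonneg α ha hb' hw₁')

/-- Data processing for the Rényi divergence under the binary channel `i ↦ Bernoulli (w i)`. -/
theorem renyi_le_of_binary_channel {α : ℝ} (hα : α ∈ Set.Ioo (0 : ℝ) 1 ∪ Set.Ioi (1 : ℝ))
    (ha : ∀ i ∈ s, 0 ≤ a i) (hb : ∀ i ∈ s, 0 < b i) (hA : 0 < ∑ i ∈ s, a i)
    (hw₀ : ∀ i ∈ s, 0 ≤ w i) (hw₁ : ∀ i ∈ s, w i ≤ 1) :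
    1 / (α - 1) * log ((∑ i ∈ s, a i * w i) ^ α * (∑ i ∈ s, b i * w i) ^ (1 - α) +
        (∑ i ∈ s, a i * (1 - w i)) ^ α * (∑ i ∈ s, b i * (1 - w i)) ^ (1 - α)) ≤
      1 / (α - 1) * log (∑ i ∈ s, a i ^ α * b i ^ (1 - α)) := by
  have hb' : ∀ i ∈ s, 0 ≤ b i := fun i hi => (hb i hi).le
  have hab : ∀ i ∈ s, b i = 0 → a i = 0 := fun i hi h => absurd h (hb i hi).ne'
  rcases hα with ⟨hα₀, hα₁⟩ | hα₁
  · refine mul_le_mul_of_nonpos_left (log_le_log ?_ ?_) (one_div_nonpos.mpr (by linarith))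
    · exact sum_rpow_mul_rpow_one_sub_pos α ha hb hA
    · exact sum_rpow_mul_rpow_one_sub_le_add hα₀.le hα₁.le ha hb' hab hw₀ hw₁
  · refine mul_le_mul_of_nonneg_left (log_le_log ?_ ?_)
      (one_div_nonneg.mpr (by linarith [Set.mem_Ioi.mp hα₁]))
    · exact add_sum_mul_rpow_mul_sum_mul_rpow_one_sub_pos α ha hb hA hw₀ hw₁
    · exact add_le_sum_rpow_mul_rpow_one_sub (le_of_lt hα₁) ha hb' hab hw₀ hw₁

end Perspective

lemma sum_div_mul_eq_one_div {X Y : Type*} [Fintype X] [Fintype Y] {σ : Y → ℝ}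
    {Λ : Y → X → ℝ} (hσ : ∑ y, σ y = 1) (hΛ : ∀ y, ∑ x, Λ y x = 1) (c : ℝ) :
    ∑ z : X × Y, σ z.2 / c * Λ z.2 z.1 = 1 / c := by
  simp only [Fintype.sum_prod_type_right, ← mul_sum, hΛ, mul_one, ← sum_div, hσ]

theorem renyi_guessing_bound_general {X Y : Type*} [Fintype X] [Fintype Y] (m : ℕ)
    (hm : Fintype.card X = m) (hm2 : 2 ≤ m)
    (P : X × Y → ℝ) (hP0 : ∀ z, 0 ≤ P z) (hP1 : ∑ z, P z = 1)
    (σ : Y → ℝ) (hσ0 : ∀ y, 0 < σ y) (hσ1 : ∑ y, σ y = 1)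
    (Λ : Y → X → ℝ) (hΛ0 : ∀ y x, 0 ≤ Λ y x) (hΛ1 : ∀ y, ∑ x, Λ y x = 1)
    (PΛ : ℝ) (hPΛ : PΛ = ∑ z : X × Y, P z * Λ z.2 z.1)
    (α : ℝ) (hα : α ∈ Set.Ioo (0 : ℝ) 1 ∪ Set.Ioi (1 : ℝ)) :
    (1 / (α - 1)) * Real.log (∑ z : X × Y, P z ^ α * (σ z.2 / m) ^ (1 - α)) ≥
      (1 / (α - 1)) * Real.log
        (PΛ ^ α * (1 / (m : ℝ)) ^ (1 - α) +
          (1 - PΛ) ^ α * (1 - 1 / (m : ℝ)) ^ (1 - α)) := by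
  have hm0 : (0 : ℝ) < m := by positivity
  have hQ1 : ∑ z : X × Y, σ z.2 / m = 1 := by
    simp only [Fintype.sum_prod_type_right, sum_const, card_univ, hm, nsmul_eq_mul]
    simp [mul_div_cancel₀ _ hm0.ne', hσ1]
  have hQw := sum_div_mul_eq_one_div (Λ := Λ) hσ1 hΛ1 m
  have hw₁ : ∀ z : X × Y, Λ z.2 z.1 ≤ 1 := fun z =>
    hΛ1 z.2 ▸ single_le_sum (fun x _ => hΛ0 z.2 x) (mem_univ z.1)
  have hdp := renyi_le_of_binary_channel hα (fun z _ => hP0 z)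
    (fun z _ => div_pos (hσ0 z.2) hm0) (hP1 ▸ one_pos) (fun z _ => hΛ0 z.2 z.1) fun z _ => hw₁ z
  simp only [mul_sub, mul_one, sum_sub_distrib, hP1, hQ1, hQw, ← hPΛ] at hdp
  exact hdp

/-- **Data-processing bound for guessing strategies.**
For a joint pmf `P` on `X × Y` with `|X| = m ≥ 2`, a strictly positive pmf `σ` on `Y`,
and a randomized guessing strategy `Λ` (a pmf on `X` for each `y`), with correct-guessing
probability `PΛ = ∑ (x,y), P (x,y) * Λ y x` satisfying `0 < PΛ < 1`, for every
`α ∈ (0,1) ∪ (1,∞)` we have `D_α(P, π_X ⊗ σ) ≥ d_α(PΛ, 1/m)`. -/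
theorem renyi_guessing_bound {X Y : Type*} [Fintype X] [Fintype Y] (m : ℕ)
    (hm : Fintype.card X = m) (hm2 : 2 ≤ m)
    (P : X × Y → ℝ) (hP0 : ∀ z, 0 ≤ P z) (hP1 : ∑ z, P z = 1)
    (σ : Y → ℝ) (hσ0 : ∀ y, 0 < σ y) (hσ1 : ∑ y, σ y = 1)
    (Λ : Y → X → ℝ) (hΛ0 : ∀ y x, 0 ≤ Λ y x) (hΛ1 : ∀ y, ∑ x, Λ y x = 1)
    (PΛ : ℝ) (hPΛ : PΛ = ∑ z : X × Y, P z * Λ z.2 z.1)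
    (h0 : 0 < PΛ) (h1 : PΛ < 1)
    (α : ℝ) (hα : α ∈ Set.Ioo (0 : ℝ) 1 ∪ Set.Ioi (1 : ℝ)) :
    (1 / (α - 1)) * Real.log (∑ z : X × Y, P z ^ α * (σ z.2 / m) ^ (1 - α)) ≥
      (1 / (α - 1)) * Real.log
        (PΛ ^ α * (1 / (m : ℝ)) ^ (1 - α) +
          (1 - PΛ) ^ α * (1 - 1 / (m : ℝ)) ^ (1 - α)) :=
  renyi_guessing_bound_general m hm hm2 P hP0 hP1 σ hσ0 hσ1 Λ hΛ0 hΛ1 PΛ hPΛ α hα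
end

section
/- Let X and Y be finite sets with |X| = m ≥ 2 and let P be a probability mass function on X × Y. Let P_opt(X|Y) = ∑_y max_x P(x,y) denote the optimal guessing probability of x from y. Then the conditional Shannon entropy satisfies Fano's inequality: H(X|Y) ≤ (1 − P_opt(X|Y)) · log(m − 1) + h₂(P_opt(X|Y)), where h₂(t) = −t·log t − (1−t)·log(1−t) is the binary entropy (with the convention 0·log 0 = 0). -/
/-!
Fix a guess `f y` maximising `x ↦ P (x, y)` and compare `P(· | y)` with the kernel `Q(· | y)`
that puts mass `P_opt` on `f y` and spreads `1 - P_opt` evenly over the other `m - 1` points.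
By Gibbs' inequality `H(X|Y)` is at most the cross entropy `-∑ P log Q`, and since `P` puts mass
`P_opt` on the graph of `f` and `1 - P_opt` off it, that cross entropy is exactly
`(1 - P_opt) log (m - 1) + h₂(P_opt)`.
-/

open Real Finset

/-- `log t ≤ t - 1` at `t = q s / p`. -/
theorem neg_mul_log_div_le {p q s : ℝ} (hp : 0 < p) (hq : 0 < q) (hs : 0 < s) :
    -(p * log (p / s)) ≤ p * -log q + (q * s - p) := by
  have key : p * log (q * s / p) ≤ p * (q * s / p - 1) :=
    mul_le_mul_of_nonneg_left (log_le_sub_one_of_pos (by positivity)) hp.le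
  rw [log_div (by positivity) hp.ne', log_mul hq.ne' hs.ne'] at key
  rw [log_div hp.ne' hs.ne']
  field_simp at key
  linarith

theorem mul_neg_log_div (a : ℝ) {k : ℝ} (hk : k ≠ 0) :
    a * -log (a / k) = a * log k - a * log a := by
  rcases eq_or_ne a 0 with rfl | ha
  · simp
  · rw [log_div ha hk]
    ring

theorem exists_guess_eq_iSup {α β : Type*} [Finite α] [Nonempty α] (P : α × β → ℝ) :
    ∃ f : β → α, ∀ y, P (f y, y) = ⨆ x, P (x, y) := by
  choose f hf using fun y => Finite.exists_max fun x => P (x, y)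
  exact ⟨f, fun y => (le_antisymm (ciSup_le (hf y))
    (le_ciSup (f := fun x => P (x, y)) (Finite.bddAbove_range _) _)).symm⟩

section

variable {α β : Type*} [Fintype α]

section Guess

variable [DecidableEq α] (f : β → α)

def guessKernel (a b : ℝ) (z : α × β) : ℝ :=
  if z.1 = f z.2 then a else b

theorem sum_guessKernel_fiber (a b : ℝ) (y : β) :
    ∑ x, guessKernel f a b (x, y) = a + ((Fintype.card α : ℝ) - 1) * b := by
  have off_guess : ∀ x ∈ ({f y}ᶜ : Finset α), guessKernel f a b (x, y) = b := fun x hx => by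
    simp_all [guessKernel]
  rw [Fintype.sum_eq_add_sum_compl (f y), sum_congr rfl off_guess, sum_const, card_compl,
    card_singleton, nsmul_eq_mul, Nat.cast_sub (Fintype.card_pos_iff.2 ⟨f y⟩)]
  simp [guessKernel]

end Guess

variable [Fintype β]

noncomputable def condEntropy (P : α × β → ℝ) : ℝ :=
  ∑ z, if 0 < P z then -(P z * log (P z / ∑ x, P (x, z.2))) else 0

noncomputable def crossEntropy (P Q : α × β → ℝ) : ℝ :=
  ∑ z, P z * -log (Q z)

theorem condEntropy_le_crossEntropy {P Q : α × β → ℝ} (hP : ∀ z, 0 ≤ P z) (hQ : ∀ z, 0 ≤ Q z)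
    (hQ1 : ∀ y, ∑ x, Q (x, y) ≤ 1) (hQP : ∀ z, 0 < P z → 0 < Q z) :
    condEntropy P ≤ crossEntropy P Q := by
  have pointwise : ∀ z, (if 0 < P z then -(P z * log (P z / ∑ x, P (x, z.2))) else 0) ≤
      P z * -log (Q z) + (Q z * ∑ x, P (x, z.2) - P z) := by
    intro z
    split_ifs with hz
    · have hs : 0 < ∑ x, P (x, z.2) :=
        hz.trans_le (single_le_sum (fun x _ => hP (x, z.2)) (mem_univ z.1))
      exact neg_mul_log_div_le hz (hQP z hz) hs
    · have hz0 : P z = 0 := le_antisymm (not_lt.mp hz) (hP z)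
      simpa [hz0] using mul_nonneg (hQ z) (sum_nonneg fun x _ => hP (x, z.2))
  have mass : ∑ z : α × β, Q z * ∑ x, P (x, z.2) ≤ ∑ z, P z := by
    simp only [Fintype.sum_prod_type_right (f := P), Fintype.sum_prod_type_right
      (f := fun z : α × β => Q z * ∑ x, P (x, z.2)), ← sum_mul]
    exact sum_le_sum fun y _ =>
      mul_le_of_le_one_left (sum_nonneg fun x _ => hP (x, y)) (hQ1 y)
  calc condEntropy P
      ≤ ∑ z, (P z * -log (Q z) + (Q z * ∑ x, P (x, z.2) - P z)) :=
        sum_le_sum fun z _ => pointwise z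
    _ = crossEntropy P Q + (∑ z, Q z * ∑ x, P (x, z.2) - ∑ z, P z) := by
      rw [sum_add_distrib, sum_sub_distrib, crossEntropy]
    _ ≤ crossEntropy P Q := by linarith

section Guess

variable [DecidableEq α] (f : β → α)

def successProb (P : α × β → ℝ) : ℝ :=
  ∑ y, P (f y, y)

def errorProb (P : α × β → ℝ) : ℝ :=
  ∑ z : α × β, if z.1 = f z.2 then 0 else P z

theorem sum_ite_graph (g : α × β → ℝ) :
    ∑ z : α × β, (if z.1 = f z.2 then g z else 0) = ∑ y, g (f y, y) := by
  rw [Fintype.sum_prod_type_right]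
  exact sum_congr rfl fun y _ => by simp [sum_ite_eq']

theorem successProb_add_errorProb (P : α × β → ℝ) :
    successProb f P + errorProb f P = ∑ z, P z := by
  rw [successProb, errorProb, ← sum_ite_graph, ← sum_add_distrib]
  exact sum_congr rfl fun z _ => by split_ifs <;> simp

theorem errorProb_nonneg {P : α × β → ℝ} (hP : ∀ z, 0 ≤ P z) : 0 ≤ errorProb f P :=
  sum_nonneg fun z _ => by split_ifs <;> simp [hP]

theorem le_guessKernel_successProb_errorProb {P : α × β → ℝ} (hP : ∀ z, 0 ≤ P z)
    (z : α × β) : P z ≤ guessKernel f (successProb f P) (errorProb f P) z := by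
  unfold guessKernel
  split_ifs with hz
  · calc P z = P (f z.2, z.2) := by rw [← hz]
      _ ≤ successProb f P := single_le_sum (fun y _ => hP (f y, y)) (mem_univ z.2)
  · simpa [hz, errorProb] using single_le_sum (f := fun z : α × β => if z.1 = f z.2 then 0 else P z)
      (fun z _ => by split_ifs <;> simp [hP]) (mem_univ z)

theorem crossEntropy_guessKernel (P : α × β → ℝ) (a b : ℝ) :
    crossEntropy P (guessKernel f a b) = successProb f P * -log a + errorProb f P * -log b := by
  rw [successProb, errorProb, ← sum_ite_graph, sum_mul, sum_mul, ← sum_add_distrib, crossEntropy]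
  exact sum_congr rfl fun z _ => by unfold guessKernel; split_ifs <;> simp

end Guess

end

/-- **Fano's inequality.**
For a joint pmf `P` on `X × Y` with `|X| = m ≥ 2`, the conditional Shannon entropy
`H(X|Y) = -∑_{(x,y) : P(x,y) > 0} P(x,y) log (P(x,y) / P_Y(y))` satisfies
`H(X|Y) ≤ (1 - P_opt) log (m-1) + h₂(P_opt)` where `P_opt = ∑ y, max_x P(x,y)`
and `h₂` is the binary entropy (with `0 log 0 = 0`; note `Real.log 0 = 0`). -/
theorem fano_inequality {X Y : Type*} [Fintype X] [Fintype Y] (m : ℕ)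
    (hm : Fintype.card X = m) (hm2 : 2 ≤ m)
    (P : X × Y → ℝ) (hP0 : ∀ z, 0 ≤ P z) (hP1 : ∑ z, P z = 1)
    (Popt : ℝ) (hPopt : Popt = ∑ y, ⨆ x, P (x, y)) :
    (∑ z : X × Y,
        if 0 < P z then -(P z * Real.log (P z / (∑ x, P (x, z.2)))) else 0) ≤
      (1 - Popt) * Real.log ((m : ℝ) - 1) +
        (-(Popt * Real.log Popt) - (1 - Popt) * Real.log (1 - Popt)) := by
  classical
  have : Nonempty X := Fintype.card_pos_iff.mp (by omega)
  obtain ⟨f, hf⟩ := exists_guess_eq_iSup P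
  have hsuccess : successProb f P = Popt := by simp only [successProb, hPopt, hf]
  have herror : errorProb f P = 1 - Popt := by
    linarith [successProb_add_errorProb f P]
  have hm1 : (0 : ℝ) < m - 1 := by
    have : (2 : ℝ) ≤ m := by exact_mod_cast hm2
    linarith
  have hPopt0 : 0 ≤ Popt := hsuccess ▸ sum_nonneg fun y _ => hP0 (f y, y)
  have hPerr0 : 0 ≤ 1 - Popt := herror ▸ errorProb_nonneg f hP0
  let Q := guessKernel f Popt ((1 - Popt) / (m - 1))
  have hQ : ∀ z, 0 ≤ Q z := fun z => by unfold Q guessKernel; split_ifs <;> positivity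
  have hQ1 : ∀ y, ∑ x, Q (x, y) ≤ 1 := fun y => by
    rw [sum_guessKernel_fiber, hm, mul_div_cancel₀ _ hm1.ne', add_sub_cancel]
  have hQP : ∀ z, 0 < P z → 0 < Q z := fun z hz => by
    have hz' := hz.trans_le (le_guessKernel_successProb_errorProb f hP0 z)
    rw [hsuccess, herror] at hz'
    unfold Q guessKernel at *
    split_ifs at * <;> positivity
  calc condEntropy P ≤ crossEntropy P Q := condEntropy_le_crossEntropy hP0 hQ hQ1 hQP
    _ = _ := by
      rw [crossEntropy_guessKernel, hsuccess, herror, mul_neg_log_div _ hm1.ne']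
      ring
end

section
/- Let X and Y be finite sets with |X| = m, and let P be a probability mass function on X × Y. Define the optimal guessing probability P_opt(X|Y) = ∑_y max_x P(x,y). Then the infimum over all probability mass functions σ on Y with σ(y) > 0 for all y of D_∞(P, π_X ⊗ σ) equals log( m · P_opt(X|Y) ), where D_∞(P,Q) = max_{(x,y) : P(x,y)>0} log( P(x,y) / Q(x,y) ) and π_X ⊗ σ is the distribution (x,y) ↦ σ(y)/m. -/
/-!
Write `f y = max_x P (x, y)`, so that `P_opt = ∑ y, f y`. For any positive pmf `σ`, the
weights `P_opt • σ` and `f` have the same total mass, so some `y` has `P_opt * σ y ≤ f y`;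
at a maximiser `x` of `P (·, y)` the ratio `P (x, y) / (σ y / m)` is then at least
`m * P_opt`. Conversely, `σ ∝ f + ε` bounds every ratio by `m * (P_opt + |Y| ε)`, which tends
to `m * P_opt` as `ε → 0`.
-/

open Real Finset

/-- `D_∞(P, Q)`, written as the supremum appearing in the statement so that it unfolds to it. -/
noncomputable def renyiDivInf {α : Type*} (P Q : α → ℝ) : ℝ :=
  sSup {r | ∃ z, 0 < P z ∧ r = log (P z / Q z)}

section renyiDivInf

variable {α : Type*} {P Q : α → ℝ}

theorem log_div_le_renyiDivInf [Finite α] {z : α} (hz : 0 < P z) :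
    log (P z / Q z) ≤ renyiDivInf P Q := by
  refine le_csSup ((Set.finite_range fun z => log (P z / Q z)).subset ?_).bddAbove ⟨z, hz, rfl⟩
  rintro r ⟨z, -, rfl⟩
  exact ⟨z, rfl⟩

theorem renyiDivInf_le {c : ℝ} (hP : ∃ z, 0 < P z)
    (h : ∀ z, 0 < P z → log (P z / Q z) ≤ c) : renyiDivInf P Q ≤ c := by
  obtain ⟨z, hz⟩ := hP
  refine csSup_le ⟨_, z, hz, rfl⟩ ?_
  rintro r ⟨z, hz, rfl⟩
  exact h z hz

end renyiDivInf

section Guessing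

variable {X Y : Type*} {P : X × Y → ℝ} {m : ℝ}

theorem le_iSup_apply_mk [Finite X] (P : X × Y → ℝ) (x : X) (y : Y) :
    P (x, y) ≤ ⨆ x', P (x', y) :=
  le_ciSup (f := fun x => P (x, y)) (Finite.bddAbove_range _) x

theorem log_mul_sum_iSup_le_renyiDivInf [Finite X] [Fintype Y] (hP0 : ∀ z, 0 ≤ P z)
    (hP : ∃ z, 0 < P z) (hm : 0 < m) {σ : Y → ℝ} (hσ : ∀ y, 0 < σ y) (hσ1 : ∑ y, σ y = 1) :
    log (m * ∑ y, ⨆ x, P (x, y)) ≤ renyiDivInf P (fun z => σ z.2 / m) := by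
  obtain ⟨⟨x₀, y₀⟩, hz₀⟩ := hP
  set Popt := ∑ y, ⨆ x, P (x, y)
  have hPopt : 0 < Popt :=
    (hz₀.trans_le (le_iSup_apply_mk P x₀ y₀)).trans_le
      (single_le_sum (fun y _ => iSup_nonneg fun x => hP0 (x, y)) (mem_univ y₀))
  obtain ⟨y, -, hy⟩ : ∃ y ∈ univ, Popt * σ y ≤ ⨆ x, P (x, y) :=
    exists_le_of_sum_le ⟨y₀, mem_univ _⟩ (by rw [← mul_sum, hσ1, mul_one])
  have : Nonempty X := ⟨x₀⟩
  obtain ⟨x, hx⟩ := exists_eq_ciSup_of_finite (f := fun x => P (x, y))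
  rw [← hx] at hy
  have hxy : 0 < P (x, y) := (mul_pos hPopt (hσ y)).trans_le hy
  refine (log_le_log (mul_pos hm hPopt) ?_).trans (log_div_le_renyiDivInf hxy)
  rw [div_div_eq_mul_div, le_div_iff₀ (hσ y)]
  linarith [mul_le_mul_of_nonneg_left hy hm.le]

theorem renyiDivInf_le_log_mul_sum [Fintype Y] {w : Y → ℝ} (hw : ∀ y, 0 < w y)
    (hPw : ∀ x y, P (x, y) ≤ w y) (hP : ∃ z, 0 < P z) (hm : 0 < m) :
    renyiDivInf P (fun z => w z.2 / (∑ y, w y) / m) ≤ log (m * ∑ y, w y) := by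
  have : Nonempty Y := hP.elim fun z _ => ⟨z.2⟩
  have hW : 0 < ∑ y, w y := sum_pos (fun y _ => hw y) univ_nonempty
  refine renyiDivInf_le hP fun z hz => log_le_log (div_pos hz (by positivity [hw z.2])) ?_
  rw [div_le_iff₀ (by positivity [hw z.2])]
  field_simp
  exact hPw z.1 z.2

theorem exists_renyiDivInf_le_log [Finite X] [Fintype Y] (hP0 : ∀ z, 0 ≤ P z)
    (hP : ∃ z, 0 < P z) (hm : 0 < m) {T : ℝ} (hT : ∑ y, ⨆ x, P (x, y) < T) :
    ∃ σ : Y → ℝ, (∀ y, 0 < σ y) ∧ ∑ y, σ y = 1 ∧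
      renyiDivInf P (fun z => σ z.2 / m) ≤ log (m * T) := by
  have : Nonempty Y := hP.elim fun z _ => ⟨z.2⟩
  have hY : (0 : ℝ) < Fintype.card Y := by exact_mod_cast Fintype.card_pos
  set ε := (T - ∑ y, ⨆ x, P (x, y)) / Fintype.card Y
  have hε : 0 < ε := div_pos (sub_pos.mpr hT) hY
  set w : Y → ℝ := fun y => (⨆ x, P (x, y)) + ε
  have hw : ∀ y, 0 < w y := fun y => add_pos_of_nonneg_of_pos (iSup_nonneg fun x => hP0 (x, y)) hε
  have hwT : ∑ y, w y = T := by
    simp only [w, sum_add_distrib, sum_const, card_univ, nsmul_eq_mul, ε]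
    field_simp
    ring
  have hT0 : 0 < T := hwT ▸ sum_pos (fun y _ => hw y) univ_nonempty
  refine ⟨fun y => w y / T, fun y => div_pos (hw y) hT0, by rw [← sum_div, hwT, div_self hT0.ne'], ?_⟩
  have := renyiDivInf_le_log_mul_sum hw
    (fun x y => (le_iSup_apply_mk P x y).trans (le_add_of_nonneg_right hε.le)) hP hm
  rwa [hwT] at this

end Guessing

/-- **Rényi-∞ divergence and the optimal guessing probability.**
For a joint pmf `P` on `X × Y` with `|X| = m`, the infimum over all strictly positive
pmfs `σ` on `Y` of `D_∞(P, π_X ⊗ σ) = max_{z : P z > 0} log (P z / (σ(z.2)/m))`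
equals `log (m * P_opt(X|Y))` with `P_opt(X|Y) = ∑ y, max_x P (x, y)`. -/
theorem renyi_inf_opt_guessing {X Y : Type*} [Fintype X] [Fintype Y] (m : ℕ)
    (hm : Fintype.card X = m)
    (P : X × Y → ℝ) (hP0 : ∀ z, 0 ≤ P z) (hP1 : ∑ z, P z = 1)
    (Popt : ℝ) (hPopt : Popt = ∑ y, ⨆ x, P (x, y)) :
    IsGLB {c : ℝ | ∃ σ : Y → ℝ, (∀ y, 0 < σ y) ∧ (∑ y, σ y = 1) ∧
        c = sSup {r : ℝ | ∃ z : X × Y, 0 < P z ∧ r = Real.log (P z / (σ z.2 / m))}}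
      (Real.log ((m : ℝ) * Popt)) := by
  subst hPopt
  obtain ⟨z₀, -, hz₀⟩ : ∃ z ∈ univ, (0 : X × Y → ℝ) z < P z :=
    exists_lt_of_sum_lt (by simp [hP1])
  have hm0 : (0 : ℝ) < m := by
    rw [← hm]
    exact_mod_cast Fintype.card_pos_iff.mpr ⟨z₀.1⟩
  refine ⟨?_, fun b hb => le_of_forall_gt_imp_ge_of_dense fun c hc => ?_⟩
  · rintro c ⟨σ, hσ, hσ1, rfl⟩
    exact log_mul_sum_iSup_le_renyiDivInf hP0 ⟨z₀, hz₀⟩ hm0 hσ hσ1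
  · have hT : ∑ y, ⨆ x, P (x, y) < exp c / m := by
      rw [lt_div_iff₀ hm0, mul_comm]
      exact (le_exp_log _).trans_lt (exp_lt_exp.mpr hc)
    obtain ⟨σ, hσ, hσ1, hle⟩ := exists_renyiDivInf_le_log hP0 ⟨z₀, hz₀⟩ hm0 hT
    calc b ≤ renyiDivInf P (fun z => σ z.2 / m) := hb ⟨σ, hσ, hσ1, rfl⟩
      _ ≤ log (m * (exp c / m)) := hle
      _ = c := by rw [mul_div_cancel₀ _ hm0.ne', log_exp]
end

section
/- Let X and Y be finite sets with |X| = m ≥ 2, and let P be a probability mass function on X × Y whose Y-marginal P_Y is strictly positive. Let P_opt(X|Y) = ∑_y max_x P(x,y) and P_pg(X|Y) = ∑_y ∑_x P(x,y)² / P_Y(y). Then P_pg(X|Y) ≥ P_opt(X|Y)² + (1 − P_opt(X|Y))² / (m − 1). -/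
/-!
Fix `y` and let `x₀` be a maximiser of `P (·, y)`. Cauchy–Schwarz on the `m - 1` remaining
terms gives `∑ₓ P(x,y)² ≥ M_y² + (P_Y(y) - M_y)² / (m - 1)` with `M_y = maxₓ P(x,y)`.
Dividing by `P_Y(y)` and summing over `y`, Sedrakyan's form of Cauchy–Schwarz
`∑ a_y² / q_y ≥ (∑ a_y)² / ∑ q_y` with `∑ q_y = 1` turns the two sums into `P_opt²` and
`(1 - P_opt)²`.
-/

open Finset

theorem sq_add_sq_sum_sub_div_le_sum_sq {ι : Type*} [Fintype ι] (f : ι → ℝ) (i : ι) :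
    f i ^ 2 + (∑ j, f j - f i) ^ 2 / (Fintype.card ι - 1 : ℝ) ≤ ∑ j, f j ^ 2 := by
  classical
  have hcard : ((univ.erase i).card : ℝ) = Fintype.card ι - 1 := by
    rw [card_erase_of_mem (mem_univ i), card_univ,
      Nat.cast_sub (Fintype.card_pos_iff.mpr ⟨i⟩), Nat.cast_one]
  have hrest :
      (∑ j, f j - f i) ^ 2 / (Fintype.card ι - 1 : ℝ) ≤ ∑ j ∈ univ.erase i, f j ^ 2 := by
    rw [← add_sum_erase _ _ (mem_univ i), add_sub_cancel_left, ← hcard]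
    exact div_le_of_le_mul₀ (Nat.cast_nonneg _) (sum_nonneg fun j _ => sq_nonneg _)
      ((sq_sum_le_card_mul_sum_sq).trans_eq (mul_comm _ _))
  rw [← add_sum_erase univ (fun j => f j ^ 2) (mem_univ i)]
  linarith

theorem sq_sum_add_sq_sum_div_div_le_sum_div {ι : Type*} (s : Finset ι) (a b c q : ι → ℝ)
    {k : ℝ} (hk : 0 ≤ k) (hq : ∀ i ∈ s, 0 < q i)
    (h : ∀ i ∈ s, a i ^ 2 + b i ^ 2 / k ≤ c i) :
    ((∑ i ∈ s, a i) ^ 2 + (∑ i ∈ s, b i) ^ 2 / k) / ∑ i ∈ s, q i ≤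
      ∑ i ∈ s, c i / q i := by
  calc ((∑ i ∈ s, a i) ^ 2 + (∑ i ∈ s, b i) ^ 2 / k) / ∑ i ∈ s, q i
      = (∑ i ∈ s, a i) ^ 2 / ∑ i ∈ s, q i +
          (∑ i ∈ s, b i) ^ 2 / (∑ i ∈ s, q i) / k := by
        rw [add_div, div_right_comm]
    _ ≤ ∑ i ∈ s, a i ^ 2 / q i + (∑ i ∈ s, b i ^ 2 / q i) / k := by
        gcongr
        · exact sq_sum_div_le_sum_sq_div s a hq
        · exact sq_sum_div_le_sum_sq_div s b hq
    _ = ∑ i ∈ s, (a i ^ 2 + b i ^ 2 / k) / q i := by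
        rw [sum_div, ← sum_add_distrib]
        exact sum_congr rfl fun i _ => by ring
    _ ≤ ∑ i ∈ s, c i / q i :=
        sum_le_sum fun i hi => div_le_div_of_nonneg_right (h i hi) (hq i hi).le

theorem pretty_good_vs_optimal_general {X Y : Type*} [Fintype X] [Fintype Y] (m : ℕ)
    (hm : Fintype.card X = m)
    (P : X × Y → ℝ) (hP1 : ∑ z, P z = 1)
    (hPY : ∀ y, 0 < ∑ x, P (x, y))
    (Popt Ppg : ℝ)
    (hPopt : Popt = ∑ y, ⨆ x, P (x, y))
    (hPpg : Ppg = ∑ y, ∑ x, P (x, y) ^ 2 / (∑ x', P (x', y))) :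
    Ppg ≥ Popt ^ 2 + (1 - Popt) ^ 2 / ((m : ℝ) - 1) := by
  have hX : Nonempty X := by
    by_contra h
    simp [not_nonempty_iff.mp h] at hP1
  have hmarg : ∑ y, ∑ x, P (x, y) = 1 := by rw [← hP1, Fintype.sum_prod_type_right]
  have hm1 : (0 : ℝ) ≤ m - 1 := by
    rw [sub_nonneg, Nat.one_le_cast, ← hm]
    exact Fintype.card_pos
  choose x₀ hx₀ using fun y => exists_eq_ciSup_of_finite (f := fun x => P (x, y))
  have hsum := sq_sum_add_sq_sum_div_div_le_sum_div univ (fun y => P (x₀ y, y))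
    (fun y => ∑ x, P (x, y) - P (x₀ y, y)) (fun y => ∑ x, P (x, y) ^ 2)
    (fun y => ∑ x, P (x, y)) hm1 (fun y _ => hPY y)
    (fun y _ => hm ▸ sq_add_sq_sum_sub_div_le_sum_sq (fun x => P (x, y)) (x₀ y))
  simp only [hx₀, sum_sub_distrib, hmarg, div_one, ← hPopt] at hsum
  rw [hPpg, ge_iff_le]
  exact hsum.trans_eq (sum_congr rfl fun y _ => sum_div _ _ _)

/-- **Pretty good vs optimal guessing.**
For a joint pmf `P` on `X × Y` with `|X| = m ≥ 2` and strictly positive `Y`-marginal,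
the pretty good guessing probability `P_pg = ∑_y ∑_x P(x,y)²/P_Y(y)` satisfies
`P_pg ≥ P_opt² + (1 - P_opt)²/(m-1)` where `P_opt = ∑_y max_x P(x,y)`. -/
theorem pretty_good_vs_optimal {X Y : Type*} [Fintype X] [Fintype Y] (m : ℕ)
    (hm : Fintype.card X = m) (hm2 : 2 ≤ m)
    (P : X × Y → ℝ) (hP0 : ∀ z, 0 ≤ P z) (hP1 : ∑ z, P z = 1)
    (hPY : ∀ y, 0 < ∑ x, P (x, y))
    (Popt Ppg : ℝ)
    (hPopt : Popt = ∑ y, ⨆ x, P (x, y))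
    (hPpg : Ppg = ∑ y, ∑ x, P (x, y) ^ 2 / (∑ x', P (x', y))) :
    Ppg ≥ Popt ^ 2 + (1 - Popt) ^ 2 / ((m : ℝ) - 1) :=
  pretty_good_vs_optimal_general m hm P hP1 hPY Popt Ppg hPopt hPpg
end

section
/- Let X and Y be finite sets, and let P be a probability mass function on X × Y whose Y-marginal P_Y is strictly positive. Let P_opt(X|Y) = ∑_y max_x P(x,y) and P_pg(X|Y) = ∑_y ∑_x P(x,y)² / P_Y(y). Then P_pg(X|Y) ≥ P_opt(X|Y)². -/
/-!
For each `y` the maximum `M y = max_x P(x,y)` is one of the summands of `∑_x P(x,y)²`, so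
`P_pg ≥ ∑_y M y² / P_Y(y)`. Since the weights `P_Y(y)` sum to `1`, the Cauchy–Schwarz
inequality in Engel form bounds this from below by `(∑_y M y)² = P_opt²`.
-/

open Finset

theorem Real.iSup_sq_le_sum_sq {ι : Type*} [Fintype ι] (f : ι → ℝ) :
    (⨆ i, f i) ^ 2 ≤ ∑ i, f i ^ 2 := by
  cases isEmpty_or_nonempty ι with
  | inl _ => simp -- `⨆` over an empty index type is the junk value `0`
  | inr _ =>
    obtain ⟨i, hi⟩ := exists_eq_ciSup_of_finite (f := f)
    rw [← hi]
    exact single_le_sum (fun j _ => sq_nonneg (f j)) (mem_univ i)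

theorem sq_sum_le_sum_sq_div_of_sum_eq_one {ι : Type*} [Fintype ι] (a w : ι → ℝ)
    (hw : ∀ i, 0 < w i) (hw1 : ∑ i, w i = 1) :
    (∑ i, a i) ^ 2 ≤ ∑ i, a i ^ 2 / w i := by
  simpa [hw1] using sq_sum_div_le_sum_sq_div univ a (fun i _ => hw i)

theorem pretty_good_ge_optimal_sq_general {X Y : Type*} [Fintype X] [Fintype Y]
    (P : X × Y → ℝ) (hP1 : ∑ z, P z = 1)
    (hPY : ∀ y, 0 < ∑ x, P (x, y))
    (Popt Ppg : ℝ)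
    (hPopt : Popt = ∑ y, ⨆ x, P (x, y))
    (hPpg : Ppg = ∑ y, ∑ x, P (x, y) ^ 2 / (∑ x', P (x', y))) :
    Ppg ≥ Popt ^ 2 := by
  have hPY1 : ∑ y, ∑ x, P (x, y) = 1 := by rwa [← Fintype.sum_prod_type_right]
  subst hPopt hPpg
  calc (∑ y, ⨆ x, P (x, y)) ^ 2
      ≤ ∑ y, (⨆ x, P (x, y)) ^ 2 / ∑ x, P (x, y) :=
        sq_sum_le_sum_sq_div_of_sum_eq_one _ _ hPY hPY1
    _ ≤ ∑ y, (∑ x, P (x, y) ^ 2) / ∑ x, P (x, y) := by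
        gcongr with y
        · exact (hPY y).le
        · exact Real.iSup_sq_le_sum_sq _
    _ = ∑ y, ∑ x, P (x, y) ^ 2 / ∑ x', P (x', y) := by simp only [sum_div]

/-- **Pretty good vs optimal guessing (weaker form).**
For a joint pmf `P` on `X × Y` with strictly positive `Y`-marginal, the pretty good
guessing probability `P_pg = ∑_y ∑_x P(x,y)²/P_Y(y)` satisfies `P_pg ≥ P_opt²`
where `P_opt = ∑_y max_x P(x,y)`. -/
theorem pretty_good_ge_optimal_sq {X Y : Type*} [Fintype X] [Fintype Y]
    (P : X × Y → ℝ) (hP0 : ∀ z, 0 ≤ P z) (hP1 : ∑ z, P z = 1)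
    (hPY : ∀ y, 0 < ∑ x, P (x, y))
    (Popt Ppg : ℝ)
    (hPopt : Popt = ∑ y, ⨆ x, P (x, y))
    (hPpg : Ppg = ∑ y, ∑ x, P (x, y) ^ 2 / (∑ x', P (x', y))) :
    Ppg ≥ Popt ^ 2 :=
  pretty_good_ge_optimal_sq_general P hP1 hPY Popt Ppg hPopt hPpg
end

section
/- Fix an integer m ≥ 2 and p₀ ∈ [1/m, 1], and let P be the 'L distribution' on X = {0, 1, …, m−1} given by P(0) = p₀ and P(x) = (1 − p₀)/(m − 1) for x ≠ 0. Then the optimal guessing probability satisfies max_x P(x) = p₀, the sampling (pretty good) guessing probability satisfies ∑_x P(x)² = p₀² + (1 − p₀)²/(m − 1), and hence equality holds in the bound P_pg ≥ P_opt² + (1 − P_opt)²/(m − 1). -/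
theorem ciSup_eq_of_forall_le_apply {ι α : Type*} [ConditionallyCompleteLattice α]
    {f : ι → α} {j : ι} (h : ∀ i, f i ≤ f j) : ⨆ i, f i = f j :=
  have : Nonempty ι := ⟨j⟩
  le_antisymm (ciSup_le h) (le_ciSup ⟨f j, by rintro _ ⟨i, rfl⟩; exact h i⟩ j)

theorem Fin.sum_univ_succ_of_succ_eq {M : Type*} [AddCommMonoid M] {k : ℕ}
    {f : Fin (k + 1) → M} {b : M} (h : ∀ i : Fin k, f i.succ = b) :
    ∑ i, f i = f 0 + k • b := by
  simp [Fin.sum_univ_succ, h]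

theorem one_sub_div_sub_one_le {m p : ℝ} (hm : 1 < m) (hp : 1 / m ≤ p) :
    (1 - p) / (m - 1) ≤ p := by
  have hm₀ : 0 < m := by linarith
  rw [div_le_iff₀ (by linarith)]
  rw [div_le_iff₀ hm₀] at hp
  linarith

/-- **The L distribution attains equality in the pretty-good bound.**
For `m ≥ 2` and `p₀ ∈ [1/m, 1]`, the L distribution `P` on `Fin m` with `P 0 = p₀`
and `P x = (1-p₀)/(m-1)` for `x ≠ 0` has optimal guessing probability
`max_x P x = p₀`, pretty good (sampling) guessing probability
`∑_x P x² = p₀² + (1-p₀)²/(m-1)`, hence equality holds in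
`P_pg ≥ P_opt² + (1-P_opt)²/(m-1)`. -/
theorem L_distribution_equality (m : ℕ) (hm : 2 ≤ m) (p₀ : ℝ)
    (hp₀ : p₀ ∈ Set.Icc (1 / (m : ℝ)) 1)
    (P : Fin m → ℝ)
    (hP : ∀ x, P x = if x.val = 0 then p₀ else (1 - p₀) / ((m : ℝ) - 1)) :
    (⨆ x, P x) = p₀ ∧
      (∑ x, P x ^ 2) = p₀ ^ 2 + (1 - p₀) ^ 2 / ((m : ℝ) - 1) ∧
      (∑ x, P x ^ 2) = (⨆ x, P x) ^ 2 + (1 - ⨆ x, P x) ^ 2 / ((m : ℝ) - 1) := by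
  obtain ⟨k, rfl⟩ : ∃ k, m = k + 1 := ⟨m - 1, by omega⟩
  have hk : (1 : ℝ) ≤ k := by exact_mod_cast (by omega : 1 ≤ k)
  have hcast : ((k + 1 : ℕ) : ℝ) - 1 = k := by push_cast; ring
  have hP0 : P 0 = p₀ := by simp [hP]
  have hPsucc (i : Fin k) : P i.succ = (1 - p₀) / k := by
    rw [hP, Fin.val_succ, if_neg (i : ℕ).succ_ne_zero, hcast]
  have hsup : (⨆ x, P x) = p₀ := by
    refine hP0 ▸ ciSup_eq_of_forall_le_apply fun x => ?_
    rw [hP0, hP]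
    split_ifs
    · exact le_rfl
    · exact one_sub_div_sub_one_le (by push_cast; linarith) hp₀.1
  have hsum : (∑ x, P x ^ 2) = p₀ ^ 2 + (1 - p₀) ^ 2 / ((k + 1 : ℕ) - 1 : ℝ) := by
    rw [Fin.sum_univ_succ_of_succ_eq (fun i => by rw [hPsucc i]), hP0, hcast, nsmul_eq_mul]
    field_simp
  exact ⟨hsup, hsum, hsup ▸ hsum⟩
end

section
/- Let X and Y be finite sets with |X| = m ≥ 2, let P be a probability mass function on X × Y, and let σ be any probability mass function on Y. Let P_opt = ∑_y max_x P(x,y) be the optimal guessing probability. Then the squared Bhattacharyya fidelity between P and the product distribution π_X ⊗ σ satisfies ( ∑_{x,y} √( P(x,y) · σ(y)/m ) )² ≤ (1/m) · ( √P_opt + √(m − 1) · √(1 − P_opt) )². -/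
/-!
Factor the fidelity column by column as `m^{-1/2} ∑_y √σ(y) ∑_x √P(x,y)`. In each column split off
the largest entry `M(y) = max_x P(x,y)`; Cauchy–Schwarz over the remaining `m - 1` entries bounds
their square roots by `√(m-1) · √(S(y) - M(y))`, where `S(y)` is the column sum. Cauchy–Schwarz
against `√σ` then turns `∑_y √σ(y) √M(y)` into at most `√P_opt` and `∑_y √σ(y) √(S(y) - M(y))`
into at most `√(1 - P_opt)`.
-/

open Finset Real

theorem sum_sqrt_le_sqrt_add_sqrt_card_sub_one_mul {ι : Type*} [Fintype ι] [DecidableEq ι]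
    (f : ι → ℝ) (hf : ∀ i, 0 ≤ f i) (i₀ : ι) :
    ∑ i, √(f i) ≤ √(f i₀) + √(Fintype.card ι - 1) * √(∑ i, f i - f i₀) := by
  rw [← add_sum_erase _ _ (mem_univ i₀)]
  gcongr
  calc ∑ i ∈ univ.erase i₀, √(f i) = ∑ i ∈ univ.erase i₀, √1 * √(f i) := by simp
    _ ≤ √(∑ i ∈ univ.erase i₀, (1 : ℝ)) * √(∑ i ∈ univ.erase i₀, f i) :=
      sum_sqrt_mul_sqrt_le _ (fun _ ↦ zero_le_one) hf
    _ = √(Fintype.card ι - 1) * √(∑ i, f i - f i₀) := by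
      rw [sum_erase_eq_sub (f := f) (mem_univ i₀), sum_const, card_erase_of_mem (mem_univ i₀),
        card_univ, nsmul_one, Nat.cast_pred (Fintype.card_pos_iff.2 ⟨i₀⟩)]

theorem sum_sqrt_le_sqrt_iSup_add_sqrt_card_sub_one_mul {ι : Type*} [Fintype ι]
    (f : ι → ℝ) (hf : ∀ i, 0 ≤ f i) :
    ∑ i, √(f i) ≤ √(⨆ i, f i) + √(Fintype.card ι - 1) * √(∑ i, f i - ⨆ i, f i) := by
  classical
  cases isEmpty_or_nonempty ι
  · simp
  · obtain ⟨i₀, hi₀⟩ := exists_eq_ciSup_of_finite (f := f)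
    rw [← hi₀]
    exact sum_sqrt_le_sqrt_add_sqrt_card_sub_one_mul f hf i₀

theorem iSup_le_sum_of_nonneg {ι : Type*} [Fintype ι] (f : ι → ℝ) (hf : ∀ i, 0 ≤ f i) :
    ⨆ i, f i ≤ ∑ i, f i :=
  Real.iSup_le (fun i ↦ single_le_sum (fun j _ ↦ hf j) (mem_univ i))
    (sum_nonneg fun i _ ↦ hf i)

theorem sum_sqrt_mul_sqrt_le_sqrt_sum {ι : Type*} (s : Finset ι) {σ a : ι → ℝ}
    (hσ0 : ∀ i, 0 ≤ σ i) (hσ1 : ∑ i ∈ s, σ i = 1) (ha : ∀ i, 0 ≤ a i) :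
    ∑ i ∈ s, √(σ i) * √(a i) ≤ √(∑ i ∈ s, a i) := by
  simpa [hσ1] using sum_sqrt_mul_sqrt_le s hσ0 ha

theorem sum_sqrt_mul_div_eq {X Y : Type*} [Fintype X] [Fintype Y] (P : X × Y → ℝ)
    (hP0 : ∀ z, 0 ≤ P z) (σ : Y → ℝ) (hσ0 : ∀ y, 0 ≤ σ y) (c : ℝ) :
    ∑ z : X × Y, √(P z * (σ z.2 / c)) = (∑ y, √(σ y) * ∑ x, √(P (x, y))) / √c := by
  rw [Fintype.sum_prod_type, sum_comm, sum_div]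
  refine sum_congr rfl fun y _ ↦ ?_
  rw [mul_sum, sum_div]
  refine sum_congr rfl fun x _ ↦ ?_
  rw [sqrt_mul (hP0 _), sqrt_div (hσ0 y)]
  ring

theorem fidelity_guessing_bound_general {X Y : Type*} [Fintype X] [Fintype Y] (m : ℕ)
    (hm : Fintype.card X = m)
    (P : X × Y → ℝ) (hP0 : ∀ z, 0 ≤ P z) (hP1 : ∑ z, P z = 1)
    (σ : Y → ℝ) (hσ0 : ∀ y, 0 ≤ σ y) (hσ1 : ∑ y, σ y = 1)
    (Popt : ℝ) (hPopt : Popt = ∑ y, ⨆ x, P (x, y)) :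
    (∑ z : X × Y, Real.sqrt (P z * (σ z.2 / m))) ^ 2 ≤
      (1 / (m : ℝ)) *
        (Real.sqrt Popt + Real.sqrt ((m : ℝ) - 1) * Real.sqrt (1 - Popt)) ^ 2 := by
  set M : Y → ℝ := fun y ↦ ⨆ x, P (x, y)
  set S : Y → ℝ := fun y ↦ ∑ x, P (x, y)
  have hM0 : ∀ y, 0 ≤ M y := fun y ↦ Real.iSup_nonneg fun x ↦ hP0 _
  have hMS : ∀ y, 0 ≤ S y - M y := fun y ↦ sub_nonneg.2 (iSup_le_sum_of_nonneg _ fun x ↦ hP0 _)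
  have hSM : ∑ y, (S y - M y) = 1 - Popt := by
    rw [sum_sub_distrib, ← hP1, Fintype.sum_prod_type_right, hPopt]
  have hcols : ∑ y, √(σ y) * ∑ x, √(P (x, y)) ≤ √Popt + √((m : ℝ) - 1) * √(1 - Popt) :=
    calc ∑ y, √(σ y) * ∑ x, √(P (x, y))
        ≤ ∑ y, √(σ y) * (√(M y) + √((m : ℝ) - 1) * √(S y - M y)) := by
          gcongr with y
          exact hm ▸ sum_sqrt_le_sqrt_iSup_add_sqrt_card_sub_one_mul _ fun x ↦ hP0 _
      _ = ∑ y, √(σ y) * √(M y) + √((m : ℝ) - 1) * ∑ y, √(σ y) * √(S y - M y) := by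
          rw [mul_sum, ← sum_add_distrib]
          exact sum_congr rfl fun y _ ↦ by ring
      _ ≤ √Popt + √((m : ℝ) - 1) * √(1 - Popt) := by
          rw [← hSM, hPopt]
          gcongr
          · exact sum_sqrt_mul_sqrt_le_sqrt_sum univ hσ0 hσ1 hM0
          · exact sum_sqrt_mul_sqrt_le_sqrt_sum univ hσ0 hσ1 hMS
  calc (∑ z : X × Y, √(P z * (σ z.2 / m))) ^ 2
      = (∑ y, √(σ y) * ∑ x, √(P (x, y))) ^ 2 / m := by
        rw [sum_sqrt_mul_div_eq P hP0 σ hσ0, div_pow, sq_sqrt m.cast_nonneg]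
    _ ≤ (√Popt + √((m : ℝ) - 1) * √(1 - Popt)) ^ 2 / m := by gcongr
    _ = _ := by ring

/-- **Fidelity–guessing bound (classical).**
For a joint pmf `P` on `X × Y` with `|X| = m ≥ 2` and any pmf `σ` on `Y`, the squared
Bhattacharyya fidelity between `P` and the product `π_X ⊗ σ` is at most
`(1/m)(√P_opt + √(m-1)·√(1-P_opt))²`, where `P_opt = ∑_y max_x P(x,y)`. -/
theorem fidelity_guessing_bound {X Y : Type*} [Fintype X] [Fintype Y] (m : ℕ)
    (hm : Fintype.card X = m) (hm2 : 2 ≤ m)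
    (P : X × Y → ℝ) (hP0 : ∀ z, 0 ≤ P z) (hP1 : ∑ z, P z = 1)
    (σ : Y → ℝ) (hσ0 : ∀ y, 0 ≤ σ y) (hσ1 : ∑ y, σ y = 1)
    (Popt : ℝ) (hPopt : Popt = ∑ y, ⨆ x, P (x, y)) :
    (∑ z : X × Y, Real.sqrt (P z * (σ z.2 / m))) ^ 2 ≤
      (1 / (m : ℝ)) *
        (Real.sqrt Popt + Real.sqrt ((m : ℝ) - 1) * Real.sqrt (1 - Popt)) ^ 2 :=
  fidelity_guessing_bound_general m hm P hP0 hP1 σ hσ0 hσ1 Popt hPopt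
end

section
/- Let m > 1 be a real number and let x, z be real numbers with 1/m ≤ x ≤ 1 and 1/m ≤ z ≤ 1. If m·z = ( √x + √(m − 1) · √(1 − x) )², then (x, z) lies on the ellipse m·(x + z − 1)² + (m/(m − 1))·(x − z)² = 1. -/
theorem ellipse_cleared_of_mul_eq_add_sq {m x z s t : ℝ} (hs : s ^ 2 = x)
    (ht : t ^ 2 = (m - 1) * (1 - x)) (hz : m * z = (s + t) ^ 2) :
    m * (m - 1) * (x + z - 1) ^ 2 + m * (x - z) ^ 2 = m - 1 := by
  have hz' : m * z = x + (m - 1) * (1 - x) + 2 * (s * t) := by linear_combination hz + hs + ht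
  have hst : (s * t) ^ 2 = (m - 1) * x * (1 - x) := by linear_combination t ^ 2 * hs + x * ht
  linear_combination (m * z - x - (m - 1) * (1 - x) + 2 * (s * t)) * hz' + 4 * hst

theorem ellipse_of_mul_eq_add_sq {m x z s t : ℝ} (hm : m ≠ 1) (hs : s ^ 2 = x)
    (ht : t ^ 2 = (m - 1) * (1 - x)) (hz : m * z = (s + t) ^ 2) :
    m * (x + z - 1) ^ 2 + (m / (m - 1)) * (x - z) ^ 2 = 1 := by
  have hm' : m - 1 ≠ 0 := sub_ne_zero.2 hm
  have h := ellipse_cleared_of_mul_eq_add_sq hs ht hz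
  field_simp
  linear_combination h

theorem uncertainty_boundary_ellipse_general (m x z : ℝ) (hm : 1 < m)
    (hx0 : 1 / m ≤ x) (hx1 : x ≤ 1)
    (h : m * z = (Real.sqrt x + Real.sqrt (m - 1) * Real.sqrt (1 - x)) ^ 2) :
    m * (x + z - 1) ^ 2 + (m / (m - 1)) * (x - z) ^ 2 = 1 := by
  have hx : 0 ≤ x := (one_div_pos.2 (by linarith)).le.trans hx0
  refine ellipse_of_mul_eq_add_sq hm.ne' (Real.sq_sqrt hx) ?_ h
  rw [mul_pow, Real.sq_sqrt (by linarith), Real.sq_sqrt (by linarith)]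

/-- **The uncertainty boundary is an ellipse.**
For real `m > 1` and `x, z ∈ [1/m, 1]`, if `m·z = (√x + √(m-1)·√(1-x))²` then
`(x, z)` lies on the ellipse `m·(x+z-1)² + (m/(m-1))·(x-z)² = 1`. -/
theorem uncertainty_boundary_ellipse (m x z : ℝ) (hm : 1 < m)
    (hx0 : 1 / m ≤ x) (hx1 : x ≤ 1) (hz0 : 1 / m ≤ z) (hz1 : z ≤ 1)
    (h : m * z = (Real.sqrt x + Real.sqrt (m - 1) * Real.sqrt (1 - x)) ^ 2) :
    m * (x + z - 1) ^ 2 + (m / (m - 1)) * (x - z) ^ 2 = 1 :=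
  uncertainty_boundary_ellipse_general m x z hm hx0 hx1 h
end

section
/- Let d ≥ 2 be an integer and θ ∈ [0, π/2]. Define x = (d·cos θ + sin θ)² / ( d·(d + sin 2θ) ) and z = (d·sin θ + cos θ)² / ( d·(d + sin 2θ) ). Then, with m = d², the pair (x, z) satisfies the ellipse equation m·(x + z − 1)² + (m/(m − 1))·(x − z)² = 1. -/
/-!
Write `c = cos θ`, `s = sin θ`, `u = 2sc = sin 2θ`, `v = c² - s² = cos 2θ` and `D = d(d + u)`.
Because `c² + s² = 1`, the two fidelities satisfy `x + z - 1 = (1 + d u)/D` and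
`x - z = (d² - 1) v/D`, so the ellipse equation reduces to
`(1 + d u)² + (d² - 1) v² = (d + u)²`, which holds on the unit circle `u² + v² = 1`.
-/

section EllipseAlgebra

variable {K : Type*} [Field K] {d a b u v : K}

theorem sq_one_add_mul_add_mul_sq_eq_sq_add (huv : u ^ 2 + v ^ 2 = 1) :
    (1 + d * u) ^ 2 + (d ^ 2 - 1) * v ^ 2 = (d + u) ^ 2 := by
  linear_combination (d ^ 2 - 1) * huv

theorem ellipse_eq_of_sq_add_sq_eq_one (huv : u ^ 2 + v ^ 2 = 1) (hd : d ≠ 0)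
    (hdu : d + u ≠ 0) :
    d ^ 2 * ((1 + d * u) / (d * (d + u))) ^ 2
      + d ^ 2 / (d ^ 2 - 1) * ((d ^ 2 - 1) * v / (d * (d + u))) ^ 2 = 1 := by
  field_simp
  linear_combination sq_one_add_mul_add_mul_sq_eq_sq_add (d := d) huv

theorem div_add_div_sub_one_eq (hab : a ^ 2 + b ^ 2 = 1) (hD : d * (d + 2 * a * b) ≠ 0) :
    (d * a + b) ^ 2 / (d * (d + 2 * a * b)) + (d * b + a) ^ 2 / (d * (d + 2 * a * b)) - 1
      = (1 + d * (2 * a * b)) / (d * (d + 2 * a * b)) := by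
  rw [← add_div, div_sub_one hD]
  congr 1
  linear_combination (d ^ 2 + 1) * hab

theorem div_sub_div_eq :
    (d * a + b) ^ 2 / (d * (d + 2 * a * b)) - (d * b + a) ^ 2 / (d * (d + 2 * a * b))
      = (d ^ 2 - 1) * (a ^ 2 - b ^ 2) / (d * (d + 2 * a * b)) := by
  rw [← sub_div]
  ring

theorem sq_two_mul_mul_add_sq_sub_sq (hab : a ^ 2 + b ^ 2 = 1) :
    (2 * a * b) ^ 2 + (a ^ 2 - b ^ 2) ^ 2 = 1 := by
  linear_combination (a ^ 2 + b ^ 2 + 1) * hab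

end EllipseAlgebra

theorem monogamy_state_on_ellipse_general (d : ℕ) (hd : 2 ≤ d) (θ : ℝ)
    (x z m : ℝ)
    (hx : x = ((d : ℝ) * Real.cos θ + Real.sin θ) ^ 2 /
        ((d : ℝ) * ((d : ℝ) + Real.sin (2 * θ))))
    (hz : z = ((d : ℝ) * Real.sin θ + Real.cos θ) ^ 2 /
        ((d : ℝ) * ((d : ℝ) + Real.sin (2 * θ))))
    (hm : m = (d : ℝ) ^ 2) :
    m * (x + z - 1) ^ 2 + (m / (m - 1)) * (x - z) ^ 2 = 1 := by
  have hd2 : (2 : ℝ) ≤ d := by exact_mod_cast hd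
  have hsin : Real.sin (2 * θ) = 2 * Real.cos θ * Real.sin θ := by
    rw [Real.sin_two_mul, mul_right_comm]
  have hdu : (d : ℝ) + 2 * Real.cos θ * Real.sin θ ≠ 0 := by
    linarith [hsin ▸ Real.neg_one_le_sin (2 * θ)]
  have hD : (d : ℝ) * (d + 2 * Real.cos θ * Real.sin θ) ≠ 0 := mul_ne_zero (by positivity) hdu
  have hab : Real.cos θ ^ 2 + Real.sin θ ^ 2 = 1 := Real.cos_sq_add_sin_sq θ
  subst hx hz hm
  rw [hsin, div_add_div_sub_one_eq hab hD, div_sub_div_eq]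
  exact ellipse_eq_of_sq_add_sq_eq_one (sq_two_mul_mul_add_sq_sub_sq hab) (by positivity) hdu

/-- **The monogamy boundary is attained.**
For integer `d ≥ 2` and `θ ∈ [0, π/2]`, the entanglement fidelities
`x = (d·cos θ + sin θ)²/(d(d + sin 2θ))` and `z = (d·sin θ + cos θ)²/(d(d + sin 2θ))`
satisfy, with `m = d²`, the ellipse equation `m(x+z-1)² + (m/(m-1))(x-z)² = 1`. -/
theorem monogamy_state_on_ellipse (d : ℕ) (hd : 2 ≤ d) (θ : ℝ)
    (hθ : θ ∈ Set.Icc (0 : ℝ) (Real.pi / 2))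
    (x z m : ℝ)
    (hx : x = ((d : ℝ) * Real.cos θ + Real.sin θ) ^ 2 /
        ((d : ℝ) * ((d : ℝ) + Real.sin (2 * θ))))
    (hz : z = ((d : ℝ) * Real.sin θ + Real.cos θ) ^ 2 /
        ((d : ℝ) * ((d : ℝ) + Real.sin (2 * θ))))
    (hm : m = (d : ℝ) ^ 2) :
    m * (x + z - 1) ^ 2 + (m / (m - 1)) * (x - z) ^ 2 = 1 :=
  monogamy_state_on_ellipse_general d hd θ x z m hx hz hm
end

section
/- Let X and Y be finite sets with |X| = m, and let P be a probability mass function on X × Y whose Y-marginal P_Y is strictly positive. Define the quadratically-weighted guessing probability P_quad(X|Y) = ∑_y ( ∑_x P(x,y)³ ) / ( ∑_x P(x,y)² ) (summing over y with ∑_x P(x,y)² > 0). Then D_3(P, π_X ⊗ P_Y) ≤ (1/2) · log( m² · P_quad(X|Y) ), where D_3 is the Rényi divergence of order 3 and π_X ⊗ P_Y is the distribution (x,y) ↦ P_Y(y)/m. -/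
/-!
Summing first over `x`, the column `y` of the Rényi sum is `m² ∑ₓ P(x,y)³ / P_Y(y)²`, and
for nonnegative entries `∑ₓ P(x,y)² ≤ P_Y(y)²`, so it is at most `m²` times the `y`-term of
`P_quad`. Taking logarithms needs a positive left side; when `m = 0` or `Y` is empty both
sides are `log 0 = 0` instead.
-/

open Finset

namespace Finset

variable {ι : Type*} {s : Finset ι} {f : ι → ℝ}

lemma sum_pow_pos_of_sum_pos (hf : ∀ i ∈ s, 0 ≤ f i) (hs : 0 < ∑ i ∈ s, f i) (n : ℕ) :
    0 < ∑ i ∈ s, f i ^ n := by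
  obtain ⟨i, hi, hfi⟩ := (sum_pos_iff_of_nonneg hf).1 hs
  exact (sum_pos_iff_of_nonneg fun j hj ↦ pow_nonneg (hf j hj) n).2 ⟨i, hi, pow_pos hfi n⟩

lemma sum_cube_div_sq_sum_div_eq (c : ℝ) :
    ∑ i ∈ s, f i ^ 3 / ((∑ j ∈ s, f j) / c) ^ 2 =
      c ^ 2 * ((∑ i ∈ s, f i ^ 3) / (∑ i ∈ s, f i) ^ 2) := by
  rw [← sum_div, div_pow, div_div_eq_mul_div, mul_comm, mul_div_assoc]

lemma sum_cube_div_sq_sum_div_le (hf : ∀ i ∈ s, 0 ≤ f i) (hs : 0 < ∑ i ∈ s, f i) (c : ℝ) :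
    ∑ i ∈ s, f i ^ 3 / ((∑ j ∈ s, f j) / c) ^ 2 ≤
      c ^ 2 * ((∑ i ∈ s, f i ^ 3) / ∑ i ∈ s, f i ^ 2) := by
  rw [sum_cube_div_sq_sum_div_eq]
  have hcube : 0 ≤ ∑ i ∈ s, f i ^ 3 := (sum_pow_pos_of_sum_pos hf hs 3).le
  gcongr
  · exact sum_pow_pos_of_sum_pos hf hs 2
  · exact sum_sq_le_sq_sum_of_nonneg hf

lemma sum_cube_div_sq_sum_div_pos (hf : ∀ i ∈ s, 0 ≤ f i) (hs : 0 < ∑ i ∈ s, f i) {c : ℝ}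
    (hc : c ≠ 0) : 0 < ∑ i ∈ s, f i ^ 3 / ((∑ j ∈ s, f j) / c) ^ 2 := by
  rw [sum_cube_div_sq_sum_div_eq]
  have := sum_pow_pos_of_sum_pos hf hs 3
  positivity

end Finset

theorem renyi_three_le_log_quad_general {X Y : Type*} [Fintype X] [Fintype Y] (m : ℕ)
    (P : X × Y → ℝ) (hP0 : ∀ z, 0 ≤ P z)
    (hPY : ∀ y, 0 < ∑ x, P (x, y)) :
    (1 / 2) * Real.log (∑ z : X × Y, P z ^ 3 / ((∑ x, P (x, z.2)) / m) ^ 2) ≤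
      (1 / 2) * Real.log ((m : ℝ) ^ 2 *
        ∑ y, if 0 < ∑ x, P (x, y) ^ 2 then
          (∑ x, P (x, y) ^ 3) / (∑ x, P (x, y) ^ 2) else 0) := by
  have hcol : ∀ y, ∀ x ∈ univ, 0 ≤ P (x, y) := fun y x _ ↦ hP0 (x, y)
  simp only [fun y ↦ sum_pow_pos_of_sum_pos (hcol y) (hPY y) 2, if_true,
    Fintype.sum_prod_type_right, mul_sum]
  rcases eq_or_ne m 0 with rfl | hm
  · simp
  rcases isEmpty_or_nonempty Y with hY | hY
  · simp
  gcongr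
  · exact sum_pos (fun y _ ↦ sum_cube_div_sq_sum_div_pos (hcol y) (hPY y) (by exact_mod_cast hm))
      univ_nonempty
  · exact sum_cube_div_sq_sum_div_le (hcol _) (hPY _) _

/-- **Rényi-3 divergence and the quadratically-weighted guessing probability.**
For a joint pmf `P` on `X × Y` with `|X| = m` and strictly positive `Y`-marginal `P_Y`,
`D_3(P, π_X ⊗ P_Y) ≤ (1/2) log (m² · P_quad(X|Y))`, where
`D_3(P,Q) = (1/2) log ∑ P(z)³/Q(z)²` and
`P_quad(X|Y) = ∑_y (∑_x P(x,y)³)/(∑_x P(x,y)²)` (over `y` with `∑_x P(x,y)² > 0`). -/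
theorem renyi_three_le_log_quad {X Y : Type*} [Fintype X] [Fintype Y] (m : ℕ)
    (hm : Fintype.card X = m)
    (P : X × Y → ℝ) (hP0 : ∀ z, 0 ≤ P z) (hP1 : ∑ z, P z = 1)
    (hPY : ∀ y, 0 < ∑ x, P (x, y)) :
    (1 / 2) * Real.log (∑ z : X × Y, P z ^ 3 / ((∑ x, P (x, z.2)) / m) ^ 2) ≤
      (1 / 2) * Real.log ((m : ℝ) ^ 2 *
        ∑ y, if 0 < ∑ x, P (x, y) ^ 2 then
          (∑ x, P (x, y) ^ 3) / (∑ x, P (x, y) ^ 2) else 0) :=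
  renyi_three_le_log_quad_general m P hP0 hPY
end

section
/- Let X and Y be finite sets with |X| = m ≥ 2, and let P be a probability mass function on X × Y whose Y-marginal P_Y is strictly positive. Let P_opt(X|Y) = ∑_y max_x P(x,y) and P_quad(X|Y) = ∑_y ( ∑_x P(x,y)³ ) / ( ∑_x P(x,y)² ) (summing over y with ∑_x P(x,y)² > 0). Then P_quad(X|Y) ≥ P_opt(X|Y)³ + (1 − P_opt(X|Y))³ / (m − 1)². -/
/-!
Fix `y`, let `q = ∑ₓ P(x,y)` and let `t` be the fraction of `q` carried by a most
likely `x`. Cauchy–Schwarz, `(∑ P²)² ≤ (∑ P³)(∑ P)`, bounds the `y`-term of `P_quad`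
below by `∑ₓ P² / q`; splitting off the maximal entry and applying `(∑ a)² ≤ n ∑ a²`
to the other `m - 1` entries gives `∑ₓ P² ≥ q² (t² + (1-t)²/(m-1)) ≥ q² f(t)` with
`f = guessBound (m - 1)`. Hence `P_quad ≥ ∑_y q_y f(t_y)`, and as `f` is convex on
`[0,1]`, `∑ q_y = 1` and `∑ q_y t_y = P_opt`, Jensen's inequality gives
`P_quad ≥ f(P_opt)`.
-/

open Finset

noncomputable def guessBound (M t : ℝ) : ℝ := t ^ 3 + (1 - t) ^ 3 / M ^ 2

lemma guessBound_le {M t : ℝ} (hM : 1 ≤ M) (ht₀ : 0 ≤ t) (ht₁ : t ≤ 1) :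
    guessBound M t ≤ t ^ 2 + (1 - t) ^ 2 / M := by
  have hM₀ : 0 < M := by linarith
  have h₁ : t ^ 3 ≤ t ^ 2 := pow_le_pow_of_le_one ht₀ ht₁ (by norm_num)
  have h₂ : (1 - t) ^ 3 / M ^ 2 ≤ (1 - t) ^ 2 / M :=
    calc (1 - t) ^ 3 / M ^ 2 = (1 - t) ^ 2 / M * ((1 - t) / M) := by ring
      _ ≤ (1 - t) ^ 2 / M :=
        mul_le_of_le_one_right (by positivity) ((div_le_one hM₀).2 (by linarith))
  unfold guessBound
  linarith

lemma guessBound_sum_le {ι : Type*} (s : Finset ι) (M : ℝ) {w t : ι → ℝ}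
    (hw : ∀ i ∈ s, 0 ≤ w i) (hw₁ : ∑ i ∈ s, w i = 1)
    (ht₀ : ∀ i ∈ s, 0 ≤ t i) (ht₁ : ∀ i ∈ s, t i ≤ 1) :
    guessBound M (∑ i ∈ s, w i * t i) ≤ ∑ i ∈ s, w i * guessBound M (t i) := by
  have hcompl : 1 - ∑ i ∈ s, w i * t i = ∑ i ∈ s, w i * (1 - t i) := by
    simp only [mul_sub, mul_one, sum_sub_distrib, hw₁]
  have h₁ := Real.pow_arith_mean_le_arith_mean_pow s w t hw hw₁ ht₀ 3
  have h₂ := Real.pow_arith_mean_le_arith_mean_pow s w (1 - t ·) hw hw₁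
    (fun i hi => sub_nonneg.2 (ht₁ i hi)) 3
  simp only [guessBound, hcompl, mul_add, sum_add_distrib, ← mul_div_assoc, ← sum_div]
  gcongr

section Column

variable {X : Type*} [Fintype X] {a : X → ℝ}

lemma sum_sq_div_sum_le_sum_pow_three_div_sum_sq (ha : ∀ x, 0 ≤ a x) (hq : 0 < ∑ x, a x) :
    (∑ x, a x ^ 2) / ∑ x, a x ≤ (∑ x, a x ^ 3) / ∑ x, a x ^ 2 := by
  have hCS : (∑ x, a x ^ 2) ^ 2 ≤ (∑ x, a x ^ 3) * ∑ x, a x :=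
    sum_sq_le_sum_mul_sum_of_sq_le_mul _ (fun x _ => pow_nonneg (ha x) 3) (fun x _ => ha x)
      fun x _ => (by ring : (a x ^ 2) ^ 2 = a x ^ 3 * a x).le
  rcases (sum_nonneg fun x _ => sq_nonneg (a x) : 0 ≤ ∑ x, a x ^ 2).eq_or_lt with h | h
  · simp [← h]
  · rw [div_le_div_iff₀ hq h]
    nlinarith

lemma sq_add_sq_sum_sub_div_le_sum_sq_s14 (x₀ : X) :
    a x₀ ^ 2 + (∑ x, a x - a x₀) ^ 2 / (Fintype.card X - 1) ≤ ∑ x, a x ^ 2 := by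
  classical
  have hcard : (#(univ.erase x₀) : ℝ) = Fintype.card X - 1 := by
    rw [card_erase_of_mem (mem_univ x₀), card_univ,
      Nat.cast_pred (Fintype.card_pos_iff.2 ⟨x₀⟩)]
  have hrest : 0 ≤ ∑ x ∈ univ.erase x₀, a x ^ 2 := sum_nonneg fun x _ => sq_nonneg (a x)
  have h := sq_sum_le_card_mul_sum_sq (s := univ.erase x₀) (f := a)
  rw [sum_erase_eq_sub (mem_univ x₀), hcard] at h
  rw [sum_erase_eq_sub (mem_univ x₀)] at h hrest
  have : (∑ x, a x - a x₀) ^ 2 / (Fintype.card X - 1) ≤ ∑ x, a x ^ 2 - a x₀ ^ 2 :=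
    div_le_of_le_mul₀ (by rw [← hcard]; positivity) hrest (h.trans_eq (mul_comm _ _))
  linarith

lemma sum_mul_guessBound_le (hX : 2 ≤ Fintype.card X) (ha : ∀ x, 0 ≤ a x)
    (hq : 0 < ∑ x, a x) (x₀ : X) :
    (∑ x, a x) * guessBound (Fintype.card X - 1) (a x₀ / ∑ x, a x) ≤
      (∑ x, a x ^ 3) / ∑ x, a x ^ 2 := by
  set q := ∑ x, a x
  have hM : (1 : ℝ) ≤ Fintype.card X - 1 := by
    have : (2 : ℝ) ≤ Fintype.card X := by exact_mod_cast hX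
    linarith
  have hp : a x₀ ≤ q := single_le_sum (fun x _ => ha x) (mem_univ x₀)
  calc q * guessBound (Fintype.card X - 1) (a x₀ / q)
      ≤ q * ((a x₀ / q) ^ 2 + (1 - a x₀ / q) ^ 2 / (Fintype.card X - 1)) :=
        mul_le_mul_of_nonneg_left (guessBound_le hM (div_nonneg (ha x₀) hq.le)
          ((div_le_one hq).2 hp)) hq.le
    _ = (a x₀ ^ 2 + (q - a x₀) ^ 2 / (Fintype.card X - 1)) / q := by
        field_simp
    _ ≤ (∑ x, a x ^ 2) / q := by gcongr; exact sq_add_sq_sum_sub_div_le_sum_sq_s14 x₀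
    _ ≤ (∑ x, a x ^ 3) / ∑ x, a x ^ 2 := sum_sq_div_sum_le_sum_pow_three_div_sum_sq ha hq

end Column

/-- **Quadratically-weighted vs optimal guessing.**
For a joint pmf `P` on `X × Y` with `|X| = m ≥ 2` and strictly positive `Y`-marginal,
the quadratically-weighted guessing probability
`P_quad = ∑_y (∑_x P(x,y)³)/(∑_x P(x,y)²)` (over `y` with `∑_x P(x,y)² > 0`)
satisfies `P_quad ≥ P_opt³ + (1-P_opt)³/(m-1)²` where `P_opt = ∑_y max_x P(x,y)`. -/
theorem quad_weighted_vs_optimal {X Y : Type*} [Fintype X] [Fintype Y] (m : ℕ)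
    (hm : Fintype.card X = m) (hm2 : 2 ≤ m)
    (P : X × Y → ℝ) (hP0 : ∀ z, 0 ≤ P z) (hP1 : ∑ z, P z = 1)
    (hPY : ∀ y, 0 < ∑ x, P (x, y))
    (Popt Pquad : ℝ)
    (hPopt : Popt = ∑ y, ⨆ x, P (x, y))
    (hPquad : Pquad = ∑ y, if 0 < ∑ x, P (x, y) ^ 2 then
        (∑ x, P (x, y) ^ 3) / (∑ x, P (x, y) ^ 2) else 0) :
    Pquad ≥ Popt ^ 3 + (1 - Popt) ^ 3 / ((m : ℝ) - 1) ^ 2 := by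
  subst hm
  have : Nonempty X := Fintype.card_pos_iff.1 (by omega)
  choose x₀ hx₀ using fun y => exists_eq_ciSup_of_finite (f := fun x => P (x, y))
  have hq₁ : ∑ y, ∑ x, P (x, y) = 1 := by rwa [← Fintype.sum_prod_type_right]
  have hPopt' : Popt = ∑ y, (∑ x, P (x, y)) * (P (x₀ y, y) / ∑ x, P (x, y)) := by
    simp only [hPopt, ← hx₀, mul_div_cancel₀ _ (hPY _).ne']
  -- The guard in `P_quad` is vacuous: when `∑ x, P (x, y) ^ 2 = 0` the quotient is `0` anyway.
  have hPquad' : Pquad = ∑ y, (∑ x, P (x, y) ^ 3) / ∑ x, P (x, y) ^ 2 := by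
    refine hPquad.trans (sum_congr rfl fun y _ => ?_)
    split_ifs with h
    · rfl
    · rw [le_antisymm (not_lt.1 h) (sum_nonneg fun x _ => sq_nonneg _), div_zero]
  rw [ge_iff_le, hPquad']
  calc Popt ^ 3 + (1 - Popt) ^ 3 / ((Fintype.card X : ℝ) - 1) ^ 2
      = guessBound (Fintype.card X - 1) Popt := rfl
    _ ≤ ∑ y, (∑ x, P (x, y)) *
          guessBound (Fintype.card X - 1) (P (x₀ y, y) / ∑ x, P (x, y)) := by
        rw [hPopt']
        exact guessBound_sum_le _ _ (fun y _ => (hPY y).le) hq₁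
          (fun y _ => div_nonneg (hP0 _) (hPY y).le)
          fun y _ => (div_le_one (hPY y)).2 (single_le_sum (fun x _ => hP0 (x, y)) (mem_univ _))
    _ ≤ ∑ y, (∑ x, P (x, y) ^ 3) / ∑ x, P (x, y) ^ 2 :=
        sum_le_sum fun y _ => sum_mul_guessBound_le hm2 (fun x => hP0 _) (hPY y) (x₀ y)
end

section
/- Let X be a finite set with |X| = m ≥ 2, let p be a probability mass function on X, and for each x ∈ X let φ_x be an n × n positive semidefinite complex matrix with trace 1. Assume φ = ∑_x p(x)·φ_x is positive definite, and let φ^{−1/2} denote the inverse of its positive semidefinite square root. Define the optimal guessing probability P_opt = sup over all POVMs {Λ_x}_{x∈X} (families of positive semidefinite n × n matrices with ∑_x Λ_x = I) of ∑_x p(x)·Tr[φ_x Λ_x], and the pretty good measurement guessing probability P_pg = ∑_x p(x)²·Tr[ φ^{−1/2} φ_x φ^{−1/2} φ_x ]. Then P_pg ≥ P_opt² + (1 − P_opt)² / (m − 1). -/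
/-!
Fix a positive definite `σ` with `Tr σ² = 1`, a POVM `Λ` with success probability `P_Λ` and a
real `s`, and put `B_x = p(x) φ_x + s σ²`. Cauchy–Schwarz for the semi-inner product
`Re Tr[σ⁻¹ X σ⁻¹ Y]`, applied to `X = B_x` and `Y = σ Λ_x σ` and summed over `x`, gives
`(P_Λ + s)² ≤ (∑ Tr[σ⁻¹ B_x σ⁻¹ B_x]) · ∑ Tr[σ Λ_x σ Λ_x]`. For `σ = φ^{1/2}` the first factor
is `P_pg + 2s + s² m`, and the second is at most `∑ Tr[σ² Λ_x] = 1` because `0 ≤ Λ_x ≤ 1`.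
The bound `(P_Λ + s)² ≤ P_pg + 2s + s² m` passes to the supremum `P_opt` whenever
`P_opt + s ≥ 0`, and `s = -(1 - P_opt)/(m - 1)` is such a choice since `P_opt ≥ 1/m`.
-/

open ComplexOrder
open scoped MatrixOrder

namespace Matrix

variable {n : Type*} [Fintype n]

lemma PosSemidef.sqrt_eq_eigenvectorUnitary_mul_diagonal [DecidableEq n] {A : Matrix n n ℂ}
    (hA : A.PosSemidef) :
    CFC.sqrt A = hA.1.eigenvectorUnitary.1 *
      diagonal ((fun r : ℝ => (r : ℂ)) ∘ (Real.sqrt ∘ hA.1.eigenvalues)) *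
      (star hA.1.eigenvectorUnitary : Matrix n n ℂ) := by
  rw [CFC.sqrt_eq_real_sqrt A hA.nonneg, cfcₙ_eq_cfc, IsHermitian.cfc_eq hA.1]
  rfl

lemma PosSemidef.re_trace_mul_nonneg {A B : Matrix n n ℂ} (hA : A.PosSemidef) (hB : B.PosSemidef) :
    0 ≤ (A * B).trace.re := by
  classical
  obtain ⟨C, rfl⟩ := CStarAlgebra.nonneg_iff_eq_star_mul_self.mp hA.nonneg
  rw [mul_assoc, trace_mul_comm]
  exact (Complex.nonneg_iff.mp (hB.mul_mul_conjTranspose_same C).trace_nonneg).1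

lemma PosSemidef.re_trace_mul_mul_mul_self_nonneg {R M : Matrix n n ℂ} (hR : R.PosSemidef)
    (hM : M.IsHermitian) : 0 ≤ (R * M * R * M).trace.re := by
  have h := hR.re_trace_mul_nonneg (hR.conjTranspose_mul_mul_same M)
  rwa [hM.eq, ← mul_assoc, ← mul_assoc] at h

lemma PosSemidef.sq_sum_re_trace_le {ι : Type*} [Fintype ι] {R : Matrix n n ℂ}
    (hR : R.PosSemidef) {A B : ι → Matrix n n ℂ} (hA : ∀ i, (A i).IsHermitian)
    (hB : ∀ i, (B i).IsHermitian) :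
    (∑ i, (R * A i * R * B i).trace.re) ^ 2 ≤
      (∑ i, (R * A i * R * A i).trace.re) * ∑ i, (R * B i * R * B i).trace.re := by
  have hBA : ∀ i, (R * B i * R * A i).trace = (R * A i * R * B i).trace := fun i => by
    rw [mul_assoc, trace_mul_comm, ← mul_assoc]
  have hquad : ∀ t : ℝ, 0 ≤ (∑ i, (R * A i * R * A i).trace.re) * (t * t) +
      (-2 * ∑ i, (R * A i * R * B i).trace.re) * t + ∑ i, (R * B i * R * B i).trace.re := by
    intro t
    have hM : ∀ i, ((t : ℂ) • A i - B i).IsHermitian := fun i =>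
      ((hA i).smul (by simp [IsSelfAdjoint])).sub (hB i)
    have hterm : ∀ i, (R * ((t : ℂ) • A i - B i) * R * ((t : ℂ) • A i - B i)).trace.re =
        (R * A i * R * A i).trace.re * (t * t) - 2 * (R * A i * R * B i).trace.re * t +
          (R * B i * R * B i).trace.re := fun i => by
      simp only [Matrix.mul_sub, Matrix.sub_mul, Matrix.mul_smul, Matrix.smul_mul, trace_sub,
        trace_smul, smul_eq_mul, hBA, Complex.sub_re, Complex.re_ofReal_mul]
      ring
    calc 0 ≤ ∑ i, (R * ((t : ℂ) • A i - B i) * R * ((t : ℂ) • A i - B i)).trace.re :=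
          Finset.sum_nonneg fun i _ => hR.re_trace_mul_mul_mul_self_nonneg (hM i)
      _ = ∑ i, ((R * A i * R * A i).trace.re * (t * t) - 2 * (R * A i * R * B i).trace.re * t +
          (R * B i * R * B i).trace.re) := Finset.sum_congr rfl fun i _ => hterm i
      _ = _ := by
          rw [Finset.sum_add_distrib, Finset.sum_sub_distrib, ← Finset.sum_mul, ← Finset.sum_mul,
            ← Finset.mul_sum]
          ring
  have := discrim_le_zero hquad
  rw [discrim] at this
  nlinarith [this]

lemma IsHermitian.re_trace_mul_mul_mul_le {S Λ : Matrix n n ℂ} [DecidableEq n] (hS : S.IsHermitian)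
    (hΛ : Λ.PosSemidef) (hΛ1 : Λ ≤ 1) : (S * Λ * S * Λ).trace.re ≤ (S * S * Λ).trace.re := by
  have h := (hΛ.conjTranspose_mul_mul_same S).re_trace_mul_nonneg (le_iff.mp hΛ1)
  rw [hS.eq, Matrix.mul_sub, Matrix.mul_one, trace_sub, Complex.sub_re,
    trace_mul_cycle S Λ S] at h
  linarith

lemma IsHermitian.sum_re_trace_mul_mul_mul_le {ι : Type*} [Fintype ι] [DecidableEq n]
    {S : Matrix n n ℂ} (hS : S.IsHermitian) {Λ : ι → Matrix n n ℂ} (hΛ : ∀ i, (Λ i).PosSemidef)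
    (hΛ1 : ∑ i, Λ i = 1) : ∑ i, (S * Λ i * S * Λ i).trace.re ≤ (S * S).trace.re := by
  have hle : ∀ i, Λ i ≤ 1 := fun i =>
    hΛ1 ▸ Finset.single_le_sum (fun j _ => (hΛ j).nonneg) (Finset.mem_univ i)
  calc ∑ i, (S * Λ i * S * Λ i).trace.re ≤ ∑ i, (S * S * Λ i).trace.re :=
        Finset.sum_le_sum fun i _ => hS.re_trace_mul_mul_mul_le (hΛ i) (hle i)
    _ = (S * S).trace.re := by
        rw [← Complex.re_sum, ← trace_sum, ← Matrix.mul_sum, hΛ1, Matrix.mul_one]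

lemma PosDef.sq_sum_re_trace_mul_le {ι : Type*} [Fintype ι] [DecidableEq n] {σ : Matrix n n ℂ}
    (hσ : σ.PosDef) {B Λ : ι → Matrix n n ℂ} (hB : ∀ i, (B i).IsHermitian)
    (hΛ : ∀ i, (Λ i).IsHermitian) :
    (∑ i, (B i * Λ i).trace.re) ^ 2 ≤
      (∑ i, (σ⁻¹ * B i * σ⁻¹ * B i).trace.re) * ∑ i, (σ * Λ i * σ * Λ i).trace.re := by
  have hdet : IsUnit σ.det := hσ.det_pos.ne'.isUnit
  have hσΛσ : ∀ i, (σ * Λ i * σ).IsHermitian := fun i => by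
    simpa only [hσ.isHermitian.eq] using isHermitian_conjTranspose_mul_mul σ (hΛ i)
  have hcross : ∀ i, (σ⁻¹ * B i * σ⁻¹ * (σ * Λ i * σ)).trace = (B i * Λ i).trace := fun i => by
    simp only [Matrix.mul_assoc, nonsing_inv_mul_cancel_left _ _ hdet]
    rw [trace_mul_comm, Matrix.mul_assoc, Matrix.mul_assoc, mul_nonsing_inv _ hdet, Matrix.mul_one]
  have hsq : ∀ i, (σ⁻¹ * (σ * Λ i * σ) * σ⁻¹ * (σ * Λ i * σ)).trace =
      (σ * Λ i * σ * Λ i).trace := fun i => by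
    simp only [Matrix.mul_assoc, nonsing_inv_mul_cancel_left _ _ hdet]
    rw [trace_mul_comm, Matrix.mul_assoc, Matrix.mul_assoc]
  simpa only [hcross, hsq] using hσ.inv.posSemidef.sq_sum_re_trace_le hB hσΛσ

end Matrix

open Matrix

section Ensemble

variable {X n : Type*} [Fintype X] [Fintype n] [DecidableEq n]

def povmSuccessProbs (p : X → ℝ) (φ : X → Matrix n n ℂ) : Set ℝ :=
  {r | ∃ Λ : X → Matrix n n ℂ, (∀ x, (Λ x).PosSemidef) ∧ (∑ x, Λ x = 1) ∧
    r = ∑ x, p x * ((φ x * Λ x).trace).re}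

lemma mem_povmSuccessProbs {p : X → ℝ} {φ : X → Matrix n n ℂ} {x : X}
    (hφx : (φ x).trace = 1) : p x ∈ povmSuccessProbs p φ := by
  classical
  refine ⟨Pi.single x 1, fun y => ?_, by simp, ?_⟩
  · rcases eq_or_ne y x with rfl | hy
    · simpa using PosSemidef.one
    · simpa [hy] using PosSemidef.zero
  · simp [Pi.single_apply, apply_ite, hφx]

lemma one_div_card_le_sSup_povmSuccessProbs [Nonempty X] {p : X → ℝ} {φ : X → Matrix n n ℂ}
    (hp1 : ∑ x, p x = 1) (hφtr : ∀ x, (φ x).trace = 1)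
    (hbdd : BddAbove (povmSuccessProbs p φ)) :
    1 / Fintype.card X ≤ sSup (povmSuccessProbs p φ) := by
  obtain ⟨x, -, hx⟩ := Finset.exists_le_of_sum_le Finset.univ_nonempty
    (show ∑ _x : X, (1 / Fintype.card X : ℝ) ≤ ∑ x, p x by simp [hp1])
  exact hx.trans (le_csSup hbdd (mem_povmSuccessProbs (hφtr x)))

lemma sum_re_trace_inv_mul_shift_sq {p : X → ℝ} {φ : X → Matrix n n ℂ} {σ : Matrix n n ℂ}
    (hσ : IsUnit σ.det) (hσtr : (σ * σ).trace = 1) (hφtr : ∀ x, (φ x).trace = 1)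
    (hp1 : ∑ x, p x = 1) (s : ℝ) :
    ∑ x, (σ⁻¹ * ((p x : ℂ) • φ x + (s : ℂ) • (σ * σ)) * σ⁻¹ *
        ((p x : ℂ) • φ x + (s : ℂ) • (σ * σ))).trace.re =
      ∑ x, p x ^ 2 * (σ⁻¹ * φ x * σ⁻¹ * φ x).trace.re + 2 * s + s ^ 2 * Fintype.card X := by
  have hφσ : ∀ x, (σ⁻¹ * (φ x * σ)).trace = 1 := fun x => by
    rw [trace_mul_comm, Matrix.mul_assoc, mul_nonsing_inv _ hσ, Matrix.mul_one, hφtr]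
  have hterm : ∀ x, (σ⁻¹ * ((p x : ℂ) • φ x + (s : ℂ) • (σ * σ)) * σ⁻¹ *
      ((p x : ℂ) • φ x + (s : ℂ) • (σ * σ))).trace.re =
      p x ^ 2 * (σ⁻¹ * φ x * σ⁻¹ * φ x).trace.re + 2 * s * p x + s ^ 2 := fun x => by
    simp only [Matrix.mul_add, Matrix.add_mul, Matrix.mul_smul, Matrix.smul_mul, Matrix.mul_assoc,
      nonsing_inv_mul_cancel_left _ _ hσ, mul_nonsing_inv_cancel_left _ _ hσ, trace_add,
      trace_smul, smul_eq_mul, hφσ, hφtr, hσtr]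
    simp only [Complex.add_re, Complex.mul_re, Complex.ofReal_re, Complex.ofReal_im,
      Complex.one_re, Complex.one_im]
    ring
  rw [Finset.sum_congr rfl fun x _ => hterm x, Finset.sum_add_distrib, Finset.sum_add_distrib,
    ← Finset.mul_sum, hp1, Finset.sum_const, Finset.card_univ, nsmul_eq_mul]
  ring

lemma sq_sum_re_trace_add_le {p : X → ℝ} {φ : X → Matrix n n ℂ} {σ : Matrix n n ℂ}
    (hσ : σ.PosDef) (hσtr : (σ * σ).trace = 1) (hφ : ∀ x, (φ x).IsHermitian)
    (hφtr : ∀ x, (φ x).trace = 1) (hp1 : ∑ x, p x = 1) {Λ : X → Matrix n n ℂ}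
    (hΛ : ∀ x, (Λ x).PosSemidef) (hΛ1 : ∑ x, Λ x = 1) (s : ℝ) :
    (∑ x, p x * (φ x * Λ x).trace.re + s) ^ 2 ≤
      ∑ x, p x ^ 2 * (σ⁻¹ * φ x * σ⁻¹ * φ x).trace.re + 2 * s + s ^ 2 * Fintype.card X := by
  set B : X → Matrix n n ℂ := fun x => (p x : ℂ) • φ x + (s : ℂ) • (σ * σ) with hB_def
  have hσσ : (σ * σ).IsHermitian := by
    simpa only [hσ.isHermitian.eq] using isHermitian_conjTranspose_mul_self σ
  have hB : ∀ x, (B x).IsHermitian := fun x =>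
    ((hφ x).smul (by simp [IsSelfAdjoint])).add (hσσ.smul (by simp [IsSelfAdjoint]))
  have hlin : ∑ x, (B x * Λ x).trace.re = ∑ x, p x * (φ x * Λ x).trace.re + s := by
    simp only [hB_def, Matrix.add_mul, Matrix.smul_mul, trace_add, trace_smul, smul_eq_mul,
      Complex.add_re, Complex.re_ofReal_mul, Finset.sum_add_distrib, ← Finset.mul_sum]
    rw [← Complex.re_sum, ← trace_sum, ← Matrix.mul_sum, hΛ1, Matrix.mul_one, hσtr,
      Complex.one_re, mul_one]
  have hQ0 : 0 ≤ ∑ x, (σ⁻¹ * B x * σ⁻¹ * B x).trace.re :=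
    Finset.sum_nonneg fun x _ => hσ.inv.posSemidef.re_trace_mul_mul_mul_self_nonneg (hB x)
  have hS : ∑ x, (σ * Λ x * σ * Λ x).trace.re ≤ 1 := by
    simpa [hσtr] using hσ.isHermitian.sum_re_trace_mul_mul_mul_le hΛ hΛ1
  calc (∑ x, p x * (φ x * Λ x).trace.re + s) ^ 2 = (∑ x, (B x * Λ x).trace.re) ^ 2 := by
        rw [hlin]
    _ ≤ (∑ x, (σ⁻¹ * B x * σ⁻¹ * B x).trace.re) * ∑ x, (σ * Λ x * σ * Λ x).trace.re :=
        hσ.sq_sum_re_trace_mul_le hB fun x => (hΛ x).isHermitian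
    _ ≤ ∑ x, (σ⁻¹ * B x * σ⁻¹ * B x).trace.re := mul_le_of_le_one_right hQ0 hS
    _ = _ := sum_re_trace_inv_mul_shift_sq hσ.det_pos.ne'.isUnit hσtr hφtr hp1 s

end Ensemble

lemma sq_csSup_add_le {S : Set ℝ} (hS : S.Nonempty) {s c : ℝ} (h : ∀ r ∈ S, (r + s) ^ 2 ≤ c)
    (hs : 0 ≤ sSup S + s) : (sSup S + s) ^ 2 ≤ c := by
  obtain ⟨r₀, hr₀⟩ := hS
  have hc : 0 ≤ c := (sq_nonneg _).trans (h r₀ hr₀)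
  have hsup : sSup S ≤ √c - s := csSup_le ⟨r₀, hr₀⟩ fun r hr => by
    linarith [le_abs_self (r + s), Real.abs_le_sqrt (h r hr)]
  exact (Real.le_sqrt hs hc).1 (by linarith)

lemma sq_add_sq_div_le_of_forall {P Q m : ℝ} (hm : 1 < m) (hP : 1 / m ≤ P)
    (h : ∀ s, 0 ≤ P + s → (P + s) ^ 2 ≤ Q + 2 * s + s ^ 2 * m) :
    P ^ 2 + (1 - P) ^ 2 / (m - 1) ≤ Q := by
  have hm1 : 0 < m - 1 := by linarith
  have hmP : 0 ≤ m * P - 1 := by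
    rw [div_le_iff₀ (by linarith)] at hP
    linarith
  set s := -(1 - P) / (m - 1) with hs_def
  have hPs : P + s = (m * P - 1) / (m - 1) := by
    rw [hs_def]
    field_simp
    ring
  have hval : P ^ 2 + (1 - P) ^ 2 / (m - 1) = (P + s) ^ 2 - 2 * s - s ^ 2 * m := by
    rw [hs_def]
    field_simp
    ring
  have := h s (hPs ▸ div_nonneg hmP hm1.le)
  linarith

theorem pretty_good_vs_optimal_quantum_general {X : Type*} [Fintype X] (m n : ℕ)
    (hm : Fintype.card X = m) (hm2 : 2 ≤ m)
    (p : X → ℝ) (hp1 : ∑ x, p x = 1)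
    (φ : X → Matrix (Fin n) (Fin n) ℂ)
    (hφ : ∀ x, (φ x).PosSemidef) (hφtr : ∀ x, (φ x).trace = 1)
    (hmix : (∑ x, (p x : ℂ) • φ x).PosDef)
    (Popt : ℝ)
    (hPopt : Popt = sSup {r : ℝ | ∃ Λ : X → Matrix (Fin n) (Fin n) ℂ,
        (∀ x, (Λ x).PosSemidef) ∧ (∑ x, Λ x = 1) ∧
          r = ∑ x, p x * ((φ x * Λ x).trace).re})
    (Ppg : ℝ)
    (hPpg : Ppg = ∑ x, p x ^ 2 *
        (((hmix.posSemidef.1.eigenvectorUnitary.1 *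
            Matrix.diagonal ((fun r : ℝ => (r : ℂ)) ∘ (Real.sqrt ∘ hmix.posSemidef.1.eigenvalues)) *
            (star hmix.posSemidef.1.eigenvectorUnitary : Matrix (Fin n) (Fin n) ℂ))⁻¹ * φ x *
          (hmix.posSemidef.1.eigenvectorUnitary.1 *
            Matrix.diagonal ((fun r : ℝ => (r : ℂ)) ∘ (Real.sqrt ∘ hmix.posSemidef.1.eigenvalues)) *
            (star hmix.posSemidef.1.eigenvectorUnitary : Matrix (Fin n) (Fin n) ℂ))⁻¹ * φ x).trace).re) :
    Ppg ≥ Popt ^ 2 + (1 - Popt) ^ 2 / ((m : ℝ) - 1) := by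
  rw [← hmix.posSemidef.sqrt_eq_eigenvectorUnitary_mul_diagonal] at hPpg
  set Φ := ∑ x, (p x : ℂ) • φ x with hΦ
  have hσ : (CFC.sqrt Φ).PosDef := isStrictlyPositive_iff_posDef.1
    (IsStrictlyPositive.sqrt Φ (isStrictlyPositive_iff_posDef.2 hmix))
  have hσtr : (CFC.sqrt Φ * CFC.sqrt Φ).trace = 1 := by
    rw [CFC.sqrt_mul_sqrt_self Φ hmix.posSemidef.nonneg, hΦ, trace_sum]
    simp [trace_smul, hφtr, ← Complex.ofReal_sum, hp1]
  have hbound : ∀ s, ∀ r ∈ povmSuccessProbs p φ, (r + s) ^ 2 ≤ Ppg + 2 * s + s ^ 2 * m := by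
    rintro s r ⟨Λ, hΛ, hΛ1, rfl⟩
    rw [hPpg, ← hm]
    exact sq_sum_re_trace_add_le hσ hσtr (fun x => (hφ x).isHermitian) hφtr hp1 hΛ hΛ1 s
  have hbdd : BddAbove (povmSuccessProbs p φ) := ⟨√Ppg, fun r hr =>
    (le_abs_self r).trans (Real.abs_le_sqrt (by simpa using hbound 0 r hr))⟩
  have hX : Nonempty X := Fintype.card_pos_iff.1 (by omega)
  replace hPopt : Popt = sSup (povmSuccessProbs p φ) := hPopt
  have hlow : 1 / (m : ℝ) ≤ Popt :=
    hm ▸ hPopt ▸ one_div_card_le_sSup_povmSuccessProbs hp1 hφtr hbdd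
  refine sq_add_sq_div_le_of_forall (by exact_mod_cast hm2) hlow fun s hs => ?_
  rw [hPopt] at hs ⊢
  exact sq_csSup_add_le ⟨_, mem_povmSuccessProbs (hφtr hX.some)⟩ (hbound s) hs

/-- **Pretty good vs optimal measurement (quantum).**
For an ensemble `{p x, φ x}` of `n × n` density matrices indexed by a finite set `X`
with `|X| = m ≥ 2`, whose average state `φ = ∑ x, p x • φ x` is positive definite,
the pretty good measurement guessing probability
`P_pg = ∑ x, (p x)² Tr[φ^{-1/2} φ_x φ^{-1/2} φ_x]` and the optimal guessing probability
`P_opt = sup over POVMs {Λ x} of ∑ x, p x · Tr[φ_x Λ_x]` satisfy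
`P_pg ≥ P_opt² + (1 - P_opt)²/(m - 1)`. -/
theorem pretty_good_vs_optimal_quantum {X : Type*} [Fintype X] (m n : ℕ)
    (hm : Fintype.card X = m) (hm2 : 2 ≤ m)
    (p : X → ℝ) (hp0 : ∀ x, 0 ≤ p x) (hp1 : ∑ x, p x = 1)
    (φ : X → Matrix (Fin n) (Fin n) ℂ)
    (hφ : ∀ x, (φ x).PosSemidef) (hφtr : ∀ x, (φ x).trace = 1)
    (hmix : (∑ x, (p x : ℂ) • φ x).PosDef)
    (Popt : ℝ)
    (hPopt : Popt = sSup {r : ℝ | ∃ Λ : X → Matrix (Fin n) (Fin n) ℂ,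
        (∀ x, (Λ x).PosSemidef) ∧ (∑ x, Λ x = 1) ∧
          r = ∑ x, p x * ((φ x * Λ x).trace).re})
    (Ppg : ℝ)
    (hPpg : Ppg = ∑ x, p x ^ 2 *
        (((hmix.posSemidef.1.eigenvectorUnitary.1 *
            Matrix.diagonal ((fun r : ℝ => (r : ℂ)) ∘ (Real.sqrt ∘ hmix.posSemidef.1.eigenvalues)) *
            (star hmix.posSemidef.1.eigenvectorUnitary : Matrix (Fin n) (Fin n) ℂ))⁻¹ * φ x *
          (hmix.posSemidef.1.eigenvectorUnitary.1 *
            Matrix.diagonal ((fun r : ℝ => (r : ℂ)) ∘ (Real.sqrt ∘ hmix.posSemidef.1.eigenvalues)) *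
            (star hmix.posSemidef.1.eigenvectorUnitary : Matrix (Fin n) (Fin n) ℂ))⁻¹ * φ x).trace).re) :
    Ppg ≥ Popt ^ 2 + (1 - Popt) ^ 2 / ((m : ℝ) - 1) :=
  pretty_good_vs_optimal_quantum_general m n hm hm2 p hp1 φ hφ hφtr hmix Popt hPopt Ppg hPpg
end
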